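/- arXiv:2303.12504 — 6 statements merged into one kernel-verified Lean document; each statement's English description precedes it below -/
import Mathlib

section
/- Let c > 0 and p > 0 be real numbers. For every B with B₀ < B < 0 there exists a nonconstant, everywhere positive, periodic, twice continuously differentiable function φ : ℝ → ℝ satisfying -φ''(x) + cφ(x) - φ(x)^{p+1}/(p+1) = 0 and E(φ(x), φ'(x)) = B for all x ∈ ℝ. -/
/-!
Write `f(s) = c s - s^(p+1)/(p+1)` and `V(s) = -c s²/2 + s^(p+2)/((p+1)(p+2))`, so that the ODE is
Newton's equation `φ'' = f(φ)` with `f = -V'` and energy `φ'²/2 + V(φ)`. The potential `V`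
decreases on `[0, S]` and increases on `[S, ∞)`, where `S = ((p+1)c)^(1/p)` and `V(S) = B₀`; so for
`B₀ < B < 0` the level `V = B` is met at exactly two points `0 < a < S < b`, with `V < B` between.

The solution starting at rest at `b` stays in `[a, b]` on the energy level `B`. It comes to rest
again at some `T > 0`: otherwise it would converge monotonically to a point where both the velocity
and the force vanish, and the only points of `[a, b]` at zero velocity are `a` and `b`, which are
not equilibria. By uniqueness the motion is symmetric in time about both rest points `0` and `T`,
hence `2T`-periodic.
-/

open Set Filter Topology NNReal

section GlobalExistence

variable {E : Type*} [NormedAddCommGroup E] [NormedSpace ℝ E] [CompleteSpace E]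
  {K : ℝ≥0} {C : ℝ} {v : E → E}

lemma exists_forall_mem_Ioo_hasDerivAt_of_lipschitzWith_of_norm_le (hv : LipschitzWith K v)
    (hC : ∀ x, ‖v x‖ ≤ C) (x₀ : E) {T : ℝ} (hT : 0 < T) :
    ∃ α : ℝ → E, α 0 = x₀ ∧ ∀ t ∈ Ioo (-T) T, HasDerivAt α (v (α t)) t := by
  have hC₀ : 0 ≤ C := (norm_nonneg _).trans (hC x₀)
  have hpl : IsPicardLindelof (fun _ ↦ v) (tmin := -T) (tmax := T)
      ⟨0, by constructor <;> linarith⟩ x₀ ⟨C * T, by positivity⟩ 0 ⟨C, hC₀⟩ K :=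
    { lipschitzOnWith := fun _ _ ↦ hv.lipschitzOnWith
      continuousOn := fun _ _ ↦ continuousOn_const
      norm_le := fun _ _ x _ ↦ hC x
      mul_max_le := by simp; exact le_rfl }
  obtain ⟨α, hα₀, hα⟩ := hpl.exists_eq_forall_mem_Icc_hasDerivWithinAt₀
  exact ⟨α, hα₀, fun t ht ↦
    (hα t (Ioo_subset_Icc_self ht)).hasDerivAt (Icc_mem_nhds ht.1 ht.2)⟩

/-- Solutions on the intervals `(-(n+1), n+1)` agree on overlaps by uniqueness, and glue. -/
theorem exists_forall_hasDerivAt_of_lipschitzWith_of_norm_le (hv : LipschitzWith K v)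
    (hC : ∀ x, ‖v x‖ ≤ C) (x₀ : E) :
    ∃ α : ℝ → E, α 0 = x₀ ∧ ∀ t, HasDerivAt α (v (α t)) t := by
  choose F hF₀ hF using fun n : ℕ ↦
    exists_forall_mem_Ioo_hasDerivAt_of_lipschitzWith_of_norm_le hv hC x₀ (T := n + 1)
      (by positivity)
  have agree {m n : ℕ} (hmn : m ≤ n) : EqOn (F m) (F n) (Ioo (-(m + 1 : ℝ)) (m + 1)) := by
    have hsub : Ioo (-(m + 1 : ℝ)) (m + 1) ⊆ Ioo (-(n + 1 : ℝ)) (n + 1) :=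
      Ioo_subset_Ioo (by gcongr) (by gcongr)
    have h₀ : (0 : ℝ) ∈ Ioo (-(m + 1 : ℝ)) (m + 1) := by
      constructor <;> linarith [m.cast_nonneg (α := ℝ)]
    exact fun t ht ↦ ODE_solution_unique_of_mem_Ioo (v := fun _ ↦ v) (s := fun _ ↦ univ)
      (fun _ _ ↦ hv.lipschitzOnWith) h₀ (fun s hs ↦ ⟨hF m s hs, trivial⟩)
      (fun s hs ↦ ⟨hF n s (hsub hs), trivial⟩) ((hF₀ m).trans (hF₀ n).symm) ht
  have mem_ceil (s : ℝ) : s ∈ Ioo (-(⌈|s|⌉₊ + 1 : ℝ)) (⌈|s|⌉₊ + 1) := by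
    have := Nat.le_ceil |s|
    constructor <;> linarith [neg_abs_le s, le_abs_self s]
  refine ⟨fun t ↦ F ⌈|t|⌉₊ t, by simpa using hF₀ 0, fun t ↦ ?_⟩
  set N := ⌈|t|⌉₊ + 1
  have hN : ∀ s ∈ Ioo (-(N : ℝ)) N, F ⌈|s|⌉₊ s = F N s := fun s hs ↦
    agree (Nat.ceil_le.mpr (abs_lt.mpr hs).le) (mem_ceil s)
  have ht : t ∈ Ioo (-(N : ℝ)) N := by
    push_cast [N]
    exact mem_ceil t
  show HasDerivAt _ (v (F ⌈|t|⌉₊ t)) t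
  rw [hN t ht]
  exact (hF N t (Ioo_subset_Ioo (by linarith) (by linarith) ht)).congr_of_eventuallyEq
    (eventually_of_mem (Ioo_mem_nhds ht.1 ht.2) hN)

end GlobalExistence

lemma max_min_eq_of_mem {α : Type*} [LinearOrder α] {a b x : α} (hx : x ∈ Icc a b) :
    max a (min b x) = x := by
  rw [min_eq_right hx.2, max_eq_right hx.1]

section Huber

variable {M y : ℝ}

/-- The Huber function, the kinetic energy of a motion whose velocity is clamped to `[-M, M]`. -/
noncomputable def huber (M y : ℝ) : ℝ := ∫ s in (0 : ℝ)..y, max (-M) (min M s)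

lemma hasDerivAt_huber : HasDerivAt (huber M) (max (-M) (min M y)) y :=
  (Continuous.integral_hasStrictDerivAt (by fun_prop) 0 y).hasDerivAt

lemma huber_eq_of_mem (hy : y ∈ Icc (-M) M) : huber M y = y ^ 2 / 2 := by
  have h₀ : (0 : ℝ) ∈ Icc (-M) M := ⟨by linarith [hy.1.trans hy.2], by linarith [hy.1.trans hy.2]⟩
  rw [huber, intervalIntegral.integral_congr (g := fun s ↦ s)
    fun s hs ↦ max_min_eq_of_mem (uIcc_subset_Icc h₀ hy hs), integral_id]
  ring

lemma strictMonoOn_huber (hM : 0 < M) : StrictMonoOn (huber M) (Ici 0) :=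
  strictMonoOn_of_hasDerivWithinAt_pos (convex_Ici 0)
    (HasDerivAt.continuousOn fun _ _ ↦ hasDerivAt_huber)
    (fun _ _ ↦ hasDerivAt_huber.hasDerivWithinAt) fun y hy ↦ by
      rw [interior_Ici] at hy
      exact lt_max_of_lt_right (lt_min hM hy)

lemma strictAntiOn_huber (hM : 0 < M) : StrictAntiOn (huber M) (Iic 0) :=
  strictAntiOn_of_hasDerivWithinAt_neg (convex_Iic 0)
    (HasDerivAt.continuousOn fun _ _ ↦ hasDerivAt_huber)
    (fun _ _ ↦ hasDerivAt_huber.hasDerivWithinAt) fun y hy ↦ by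
      rw [interior_Iic] at hy
      exact max_lt (by linarith) (min_lt_of_right_lt hy)

lemma huber_nonneg (hM : 0 < M) (y : ℝ) : 0 ≤ huber M y := by
  have h₀ : huber M 0 = 0 := intervalIntegral.integral_same
  rcases le_total 0 y with hy | hy
  · exact h₀ ▸ (strictMonoOn_huber hM).monotoneOn self_mem_Ici hy hy
  · exact h₀ ▸ (strictAntiOn_huber hM).antitoneOn hy self_mem_Iic hy

lemma mem_Icc_of_huber_le (hM : 0 < M) (h : huber M y ≤ M ^ 2 / 2) : y ∈ Icc (-M) M := by
  have h_right : huber M M = M ^ 2 / 2 := huber_eq_of_mem ⟨by linarith, le_rfl⟩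
  have h_left : huber M (-M) = M ^ 2 / 2 := by
    rw [huber_eq_of_mem ⟨le_rfl, by linarith⟩]
    ring
  constructor
  · by_contra! hy
    have := strictAntiOn_huber hM (show y ∈ Iic 0 by simp only [mem_Iic]; linarith)
      (show -M ∈ Iic 0 by simp only [mem_Iic]; linarith) hy
    linarith
  · by_contra! hy
    have := strictMonoOn_huber hM (show M ∈ Ici 0 from hM.le)
      (show y ∈ Ici 0 by simp only [mem_Ici]; linarith) hy
    linarith

end Huber

section Confinement

variable {f V : ℝ → ℝ} {a b B : ℝ} {K : ℝ≥0}

/-- Outside `[a, b]` the potential is continued with the constant forces `f a` and `f b`,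
which push back into `[a, b]`. -/
lemma exists_potential_extension (hf : ContinuousOn f (Icc a b))
    (hV : ∀ x ∈ Icc a b, HasDerivAt V (-f x) x) (hab : a ≤ b) (hVa : V a = B) (hVb : V b = B)
    (hfa : 0 < f a) (hfb : f b < 0) :
    ∃ W : ℝ → ℝ, (∀ x, HasDerivAt W (-f (max a (min b x))) x) ∧ EqOn W V (Icc a b) ∧
      ∀ x ∉ Icc a b, B < W x := by
  have hg : Continuous fun x ↦ f (max a (min b x)) :=
    hf.comp_continuous (by fun_prop) fun x ↦ ⟨le_max_left _ _, max_le hab (min_le_left _ _)⟩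
  set W : ℝ → ℝ := fun x ↦ V a - ∫ s in a..x, f (max a (min b s))
  have hW : ∀ x, HasDerivAt W (-f (max a (min b x))) x := fun x ↦
    (hg.integral_hasStrictDerivAt a x).hasDerivAt.const_sub (V a)
  have hWV : EqOn W V (Icc a b) := by
    refine eq_of_has_deriv_right_eq (fun x hx ↦ ?_)
      (fun x hx ↦ (hV x (Ico_subset_Icc_self hx)).hasDerivWithinAt)
      (HasDerivAt.continuousOn fun x _ ↦ hW x)
      (fun x hx ↦ (hV x hx).continuousAt.continuousWithinAt) (by simp [W])
    have := (hW x).hasDerivWithinAt (s := Ici x)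
    rwa [max_min_eq_of_mem (Ico_subset_Icc_self hx)] at this
  refine ⟨W, hW, hWV, fun x hx ↦ ?_⟩
  rcases not_and_or.mp hx with hx | hx <;> push Not at hx
  · have hanti : StrictAntiOn W (Iic a) :=
      strictAntiOn_of_hasDerivWithinAt_neg (convex_Iic a) (HasDerivAt.continuousOn fun y _ ↦ hW y)
        (fun y _ ↦ (hW y).hasDerivWithinAt) fun y hy ↦ by
          rw [interior_Iic] at hy
          rw [max_eq_left (min_le_of_right_le hy.le)]
          linarith
    calc B = W a := by rw [hWV (left_mem_Icc.mpr hab), hVa]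
      _ < W x := hanti hx.le self_mem_Iic hx
  · have hmono : StrictMonoOn W (Ici b) :=
      strictMonoOn_of_hasDerivWithinAt_pos (convex_Ici b) (HasDerivAt.continuousOn fun y _ ↦ hW y)
        (fun y _ ↦ (hW y).hasDerivWithinAt) fun y hy ↦ by
          rw [interior_Ici] at hy
          rw [min_eq_left hy.le, max_eq_right hab]
          linarith
    calc B = W b := by rw [hWV (right_mem_Icc.mpr hab), hVb]
      _ < W x := hmono self_mem_Ici hx.le hx

lemma exists_solution_clamped (hf : LipschitzOnWith K f (Icc a b)) (hab : a ≤ b)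
    (M x₀ y₀ : ℝ) :
    ∃ x y : ℝ → ℝ, x 0 = x₀ ∧ y 0 = y₀ ∧ (∀ t, HasDerivAt x (max (-M) (min M (y t))) t) ∧
      ∀ t, HasDerivAt y (f (max a (min b (x t)))) t := by
  have hclamp : ∀ x, max a (min b x) ∈ Icc a b :=
    fun x ↦ ⟨le_max_left _ _, max_le hab (min_le_left _ _)⟩
  have hlip₁ : LipschitzWith 1 fun z : ℝ × ℝ ↦ max (-M) (min M z.2) := by
    have := ((LipschitzWith.id (α := ℝ)).const_min M).const_max (-M) |>.comp
      (LipschitzWith.prod_snd (α := ℝ) (β := ℝ))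
    rwa [mul_one] at this
  have hlip₂ : LipschitzWith K fun z : ℝ × ℝ ↦ f (max a (min b z.1)) := by
    have := hf.comp ((LipschitzWith.id (α := ℝ)).const_min b |>.const_max a).lipschitzOnWith
      (s := univ) fun x _ ↦ hclamp x
    rw [lipschitzOnWith_univ, mul_one] at this
    have := this.comp (LipschitzWith.prod_fst (α := ℝ) (β := ℝ))
    rwa [mul_one] at this
  obtain ⟨C, hC⟩ := isCompact_Icc.exists_bound_of_continuousOn hf.continuousOn
  have hbound : ∀ z : ℝ × ℝ, ‖(max (-M) (min M z.2), f (max a (min b z.1)))‖ ≤ max |M| C := by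
    intro z
    rw [Prod.norm_def]
    refine max_le_max ?_ (hC _ (hclamp _))
    rw [Real.norm_eq_abs, abs_le]
    exact ⟨le_max_of_le_left (neg_le_neg (le_abs_self M)),
      max_le (neg_le_abs M) ((min_le_left _ _).trans (le_abs_self M))⟩
  obtain ⟨α, hα₀, hα⟩ :=
    exists_forall_hasDerivAt_of_lipschitzWith_of_norm_le (hlip₁.prodMk hlip₂) hbound (x₀, y₀)
  exact ⟨fun t ↦ (α t).1, fun t ↦ (α t).2, by simp [hα₀], by simp [hα₀],
    fun t ↦ (hα t).fst, fun t ↦ (hα t).snd⟩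

/-- The clamped system conserves `huber M y + W x`. Since `W > B` outside `[a, b]` and
`huber ≥ 0`, the level `B` confines `x` to `[a, b]`; for `M` large it confines `y` to `[-M, M]`,
and there the clamps are inactive. -/
theorem exists_solution_mem_Icc (hf : LipschitzOnWith K f (Icc a b))
    (hV : ∀ x ∈ Icc a b, HasDerivAt V (-f x) x) (hVa : V a = B) (hVb : V b = B)
    (hfa : 0 < f a) (hfb : f b < 0) {x₀ y₀ : ℝ} (hx₀ : x₀ ∈ Icc a b)
    (hE₀ : y₀ ^ 2 / 2 + V x₀ = B) :
    ∃ x y : ℝ → ℝ, x 0 = x₀ ∧ y 0 = y₀ ∧ (∀ t, HasDerivAt x (y t) t) ∧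
      (∀ t, HasDerivAt y (f (x t)) t) ∧ ∀ t, x t ∈ Icc a b ∧ y t ^ 2 / 2 + V (x t) = B := by
  have hab : a ≤ b := hx₀.1.trans hx₀.2
  obtain ⟨C, hC⟩ := isCompact_Icc.exists_bound_of_continuousOn
    fun x hx ↦ (hV x hx).continuousAt.continuousWithinAt
  set M := |B| + C + 2
  have hM : 0 < M := by
    have := (norm_nonneg _).trans (hC x₀ hx₀)
    positivity
  have hVM : ∀ x ∈ Icc a b, B - V x ≤ M ^ 2 / 2 := fun x hx ↦ by
    have := neg_abs_le (V x)
    rw [← Real.norm_eq_abs] at this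
    nlinarith [hC x hx, le_abs_self B, abs_nonneg B]
  obtain ⟨W, hW, hWV, hWout⟩ := exists_potential_extension hf.continuousOn hV hab hVa hVb hfa hfb
  obtain ⟨x, y, hx0, hy0, hx, hy⟩ := exists_solution_clamped hf hab M x₀ y₀
  have hconst : ∀ t, huber M (y t) + W (x t) = B := by
    have hderiv : ∀ t, HasDerivAt (fun t ↦ huber M (y t) + W (x t)) 0 t := fun t ↦
      ((hasDerivAt_huber.comp t (hy t)).add ((hW (x t)).comp t (hx t))).congr_deriv (by ring)
    intro t
    rw [is_const_of_deriv_eq_zero (fun t ↦ (hderiv t).differentiableAt)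
      (fun t ↦ (hderiv t).deriv) t 0, hx0, hy0, hWV hx₀,
      huber_eq_of_mem (abs_le_of_sq_le_sq' ?_ hM.le), hE₀]
    linarith [hVM x₀ hx₀]
  have hxI : ∀ t, x t ∈ Icc a b := fun t ↦ by
    by_contra h
    linarith [hWout _ h, hconst t, huber_nonneg hM (y t)]
  have hyI : ∀ t, y t ∈ Icc (-M) M := fun t ↦
    mem_Icc_of_huber_le hM (by linarith [hconst t, hWV (hxI t), hVM _ (hxI t)])
  refine ⟨x, y, hx0, hy0, fun t ↦ ?_, fun t ↦ ?_, fun t ↦ ⟨hxI t, ?_⟩⟩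
  · simpa only [max_min_eq_of_mem (hyI t)] using hx t
  · simpa only [max_min_eq_of_mem (hxI t)] using hy t
  · rw [← huber_eq_of_mem (hyI t), ← hWV (hxI t), hconst t]

end Confinement

lemma eq_zero_of_tendsto_of_tendsto_deriv {g g' : ℝ → ℝ} {l m : ℝ}
    (hg : ∀ t, HasDerivAt g (g' t) t) (hl : Tendsto g atTop (𝓝 l))
    (hm : Tendsto g' atTop (𝓝 m)) : m = 0 := by
  have hmvt : ∀ t, ∃ s ∈ Ioo t (t + 1), g' s = g (t + 1) - g t := fun t ↦ by
    obtain ⟨s, hs, h⟩ := exists_hasDerivAt_eq_slope g g' (lt_add_one t)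
      (HasDerivAt.continuousOn fun s _ ↦ hg s) fun s _ ↦ hg s
    exact ⟨s, hs, by rw [h, add_sub_cancel_left, div_one]⟩
  choose s hs hgs using hmvt
  have hs_top : Tendsto s atTop atTop := tendsto_atTop_mono (fun t ↦ (hs t).1.le) tendsto_id
  have hdiff : Tendsto (fun t ↦ g (t + 1) - g t) atTop (𝓝 (l - l)) :=
    (hl.comp (tendsto_atTop_add_const_right _ 1 tendsto_id)).sub hl
  rw [sub_self] at hdiff
  exact tendsto_nhds_unique ((hm.comp hs_top).congr hgs) hdiff

lemma exists_tendsto_atTop_of_antitoneOn {g : ℝ → ℝ} {c : ℝ} (hg : AntitoneOn g (Ici c))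
    (hbdd : BddBelow (g '' Ici c)) : ∃ L, Tendsto g atTop (𝓝 L) := by
  have hanti : Antitone fun t ↦ g (max t c) := fun s t hst ↦
    hg (le_max_right s c) (le_max_right t c) (max_le_max_right c hst)
  have hbdd' : BddBelow (range fun t ↦ g (max t c)) :=
    hbdd.mono (range_subset_iff.mpr fun t ↦ mem_image_of_mem g (le_max_right t c))
  exact ⟨_, (tendsto_atTop_ciInf hanti hbdd').congr'
    ((eventually_ge_atTop c).mono fun t ht ↦ by simp [max_eq_left ht])⟩

/-- A nonvanishing velocity keeps its sign, and it cannot be positive if `x` starts at its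
maximum. -/
lemma forall_pos_neg_of_ne_zero {x y : ℝ → ℝ} (hx : ∀ t, HasDerivAt x (y t) t)
    (hy : Continuous y) (hmax : ∀ t, x t ≤ x 0) (hy0 : ∀ t > 0, y t ≠ 0) :
    ∀ t > 0, y t < 0 := by
  rcases isPreconnected_Ioi.eq_or_eq_neg_of_sq_eq hy.continuousOn hy.abs.continuousOn
    (fun t _ ↦ by simp [sq_abs]) (fun ht ↦ abs_ne_zero.mpr (hy0 _ ht)) with hpos | hneg
  · have hmono : StrictMonoOn x (Ici 0) :=
      strictMonoOn_of_hasDerivWithinAt_pos (convex_Ici 0) (HasDerivAt.continuousOn fun t _ ↦ hx t)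
        (fun t _ ↦ (hx t).hasDerivWithinAt) fun t ht ↦ by
          rw [interior_Ici] at ht
          rw [hpos ht]
          exact abs_pos.mpr (hy0 t ht)
    have := hmono self_mem_Ici (mem_Ici.mpr zero_le_one) one_pos
    linarith [hmax 1]
  · intro t ht
    rw [hneg ht]
    simpa using hy0 t ht

section Newton

variable {f V : ℝ → ℝ} {a b B : ℝ} {K : ℝ≥0} {x y : ℝ → ℝ}

/-- Reversing time about a turning point gives a solution with the same state at `T`. -/
lemma apply_two_mul_sub_of_eq_zero (hf : LipschitzOnWith K f (Icc a b))
    (hx : ∀ t, HasDerivAt x (y t) t) (hy : ∀ t, HasDerivAt y (f (x t)) t)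
    (hxI : ∀ t, x t ∈ Icc a b) {T : ℝ} (hT : y T = 0) (t : ℝ) : x (2 * T - t) = x t := by
  have hv : LipschitzOnWith (max 1 (K * 1)) (fun z : ℝ × ℝ ↦ (z.2, f z.1)) (Icc a b ×ˢ univ) :=
    LipschitzWith.prod_snd.lipschitzOnWith.prodMk
      (hf.comp LipschitzWith.prod_fst.lipschitzOnWith fun (z : ℝ × ℝ) hz ↦ hz.1)
  have hrev : ∀ s, HasDerivAt (fun t ↦ (x (2 * T - t), -y (2 * T - t)))
      (-y (2 * T - s), f (x (2 * T - s))) s := fun s ↦ by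
    have hs : HasDerivAt (fun t ↦ 2 * T - t) (-1) s := (hasDerivAt_id s).const_sub (2 * T)
    exact (((hx _).comp s hs).congr_deriv (by ring)).prodMk
      ((((hy _).comp s hs).neg).congr_deriv (by ring))
  have key := ODE_solution_unique_univ (v := fun _ z ↦ (z.2, f z.1))
    (s := fun _ ↦ Icc a b ×ˢ univ) (t₀ := T) (fun _ ↦ hv)
    (fun s ↦ ⟨hrev s, hxI _, trivial⟩) (fun s ↦ ⟨(hx s).prodMk (hy s), hxI s, trivial⟩)
    (by simp [show 2 * T - T = T by ring, hT])
  exact congrArg Prod.fst (congrFun key t)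

/-- Otherwise `x` decreases to a limit `L` with `y → -√(2(B - V L))` and `y' → f L`; both limits
must be `0`, which forces `L ∈ {a, b}` and `f L = 0`. -/
lemma exists_pos_eq_zero (hfc : ContinuousOn f (Icc a b)) (hVc : ContinuousOn V (Icc a b))
    (hVlt : ∀ x ∈ Ioo a b, V x < B) (hfa : f a ≠ 0) (hfb : f b ≠ 0)
    (hx : ∀ t, HasDerivAt x (y t) t) (hy : ∀ t, HasDerivAt y (f (x t)) t)
    (hxE : ∀ t, x t ∈ Icc a b ∧ y t ^ 2 / 2 + V (x t) = B) (hx0 : x 0 = b) :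
    ∃ T > 0, y T = 0 := by
  by_contra! h
  have hyc : Continuous y := continuous_iff_continuousAt.mpr fun t ↦ (hy t).continuousAt
  have hneg := forall_pos_neg_of_ne_zero hx hyc (fun t ↦ hx0 ▸ (hxE t).1.2) h
  obtain ⟨L, hL⟩ := exists_tendsto_atTop_of_antitoneOn
    (antitoneOn_of_hasDerivWithinAt_nonpos (convex_Ici 0) (HasDerivAt.continuousOn fun t _ ↦ hx t)
      (fun t _ ↦ (hx t).hasDerivWithinAt) fun t ht ↦ (hneg t (by simpa using ht)).le)
    ⟨a, by rintro _ ⟨t, -, rfl⟩; exact (hxE t).1.1⟩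
  have hLI : L ∈ Icc a b := isClosed_Icc.mem_of_tendsto hL (.of_forall fun t ↦ (hxE t).1)
  have hxL : Tendsto x atTop (𝓝[Icc a b] L) :=
    tendsto_nhdsWithin_iff.mpr ⟨hL, .of_forall fun t ↦ (hxE t).1⟩
  have hyL : Tendsto y atTop (𝓝 (-√(2 * (B - V L)))) := by
    refine (((continuous_const.mul (continuous_const.sub continuous_id)).sqrt.neg.tendsto
      (V L)).comp ((hVc L hLI).tendsto.comp hxL)).congr' ?_
    filter_upwards [eventually_gt_atTop 0] with t ht
    have hsq : y t ^ 2 = 2 * (B - V (x t)) := by linarith [(hxE t).2]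
    show -√(2 * (B - V (x t))) = y t
    rw [← hsq, Real.sqrt_sq_eq_abs, abs_of_neg (hneg t ht), neg_neg]
  have hVL : B ≤ V L := by
    have := eq_zero_of_tendsto_of_tendsto_deriv hx hL hyL
    have := Real.sqrt_eq_zero'.mp (neg_eq_zero.mp this)
    linarith
  have hfL : f L = 0 := eq_zero_of_tendsto_of_tendsto_deriv hy hyL ((hfc L hLI).tendsto.comp hxL)
  rcases hLI.1.eq_or_lt with rfl | haL
  · exact hfa hfL
  rcases hLI.2.eq_or_lt with rfl | hLb
  · exact hfb hfL
  exact (hVlt L ⟨haL, hLb⟩).not_ge hVL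

theorem exists_periodic_of_potential_well (hf : LipschitzOnWith K f (Icc a b))
    (hV : ∀ x ∈ Icc a b, HasDerivAt V (-f x) x) (hab : a ≤ b) (hVa : V a = B) (hVb : V b = B)
    (hVlt : ∀ x ∈ Ioo a b, V x < B) (hfa : 0 < f a) (hfb : f b < 0) :
    ∃ x y : ℝ → ℝ, (∀ t, HasDerivAt x (y t) t) ∧ (∀ t, HasDerivAt y (f (x t)) t) ∧
      (∀ t, x t ∈ Icc a b ∧ y t ^ 2 / 2 + V (x t) = B) ∧ (∃ T > 0, Function.Periodic x T) ∧
      ∃ s t, x s ≠ x t := by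
  obtain ⟨x, y, hx0, hy0, hx, hy, hxE⟩ := exists_solution_mem_Icc hf hV hVa hVb hfa hfb
    (y₀ := 0) (right_mem_Icc.mpr hab) (by simp [hVb])
  obtain ⟨T, hT, hyT⟩ := exists_pos_eq_zero hf.continuousOn
    (fun x hx ↦ (hV x hx).continuousAt.continuousWithinAt) hVlt hfa.ne' hfb.ne hx hy hxE hx0
  have hreflect {T : ℝ} (hT : y T = 0) (t : ℝ) : x (2 * T - t) = x t :=
    apply_two_mul_sub_of_eq_zero hf hx hy (fun t ↦ (hxE t).1) hT t
  refine ⟨x, y, hx, hy, hxE, ⟨2 * T, by positivity, fun t ↦ ?_⟩, ?_⟩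
  · calc x (t + 2 * T) = x (2 * T - -t) := by ring_nf
      _ = x (2 * 0 - t) := by rw [hreflect hyT]; ring_nf
      _ = x t := hreflect hy0 t
  · by_contra! hconst
    have hy_zero : ∀ t, y t = 0 := fun t ↦
      (hx t).unique ((hasDerivAt_const t b).congr_of_eventuallyEq
        (.of_forall fun s ↦ (hconst s 0).trans hx0))
    have := (hy 0).unique ((hasDerivAt_const 0 0).congr_of_eventuallyEq (.of_forall hy_zero))
    rw [hx0] at this
    linarith

end Newton

lemma contDiff_two_of_hasDerivAt {x y g : ℝ → ℝ} (hx : ∀ t, HasDerivAt x (y t) t)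
    (hy : ∀ t, HasDerivAt y (g t) t) (hg : Continuous g) : ContDiff ℝ 2 x := by
  rw [show (2 : WithTop ℕ∞) = 1 + 1 from rfl, contDiff_succ_iff_deriv]
  refine ⟨fun t ↦ (hx t).differentiableAt, by simp, ?_⟩
  rw [show deriv x = y from funext fun t ↦ (hx t).deriv, contDiff_one_iff_deriv,
    show deriv y = g from funext fun t ↦ (hy t).deriv]
  exact ⟨fun t ↦ (hy t).differentiableAt, hg⟩

section ZakharovKuznetsov

variable {c p B s : ℝ}

/-- The energy of the traveling-wave ODE is `E(φ, ξ) = ξ² / 2 + zkPotential c p φ`. -/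
noncomputable def zkPotential (c p s : ℝ) : ℝ :=
  -(c * s ^ 2) / 2 + s ^ (p + 2) / ((p + 1) * (p + 2))

/-- The traveling-wave ODE reads `φ'' = zkForce c p φ`. -/
noncomputable def zkForce (c p s : ℝ) : ℝ := c * s - s ^ (p + 1) / (p + 1)

/-- The positive zero of `zkForce c p`. -/
noncomputable def zkCritical (c p : ℝ) : ℝ := ((p + 1) * c) ^ p⁻¹

lemma hasDerivAt_zkPotential (hp : -1 < p) (s : ℝ) :
    HasDerivAt (zkPotential c p) (-zkForce c p s) s := by
  have hrpow := Real.hasDerivAt_rpow_const (x := s) (p := p + 2) (Or.inr (by linarith))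
  have hquad : HasDerivAt (fun s : ℝ ↦ s ^ 2) (2 * s) s := by simpa using hasDerivAt_pow 2 s
  refine (((hquad.const_mul c).neg.div_const 2).add
    (hrpow.div_const ((p + 1) * (p + 2)))).congr_deriv ?_
  rw [show p + 2 - 1 = p + 1 by ring, zkForce]
  field_simp [show p + 1 ≠ 0 by linarith, show p + 2 ≠ 0 by linarith]
  ring

lemma contDiff_zkForce (hp : 0 ≤ p) : ContDiff ℝ 1 (zkForce c p) :=
  (contDiff_const.mul contDiff_id).sub
    ((Real.contDiff_rpow_const_of_le (by norm_num; linarith)).div_const _)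

lemma zkForce_eq (hp : -1 < p) (hs : 0 ≤ s) :
    zkForce c p s = s * ((p + 1) * c - s ^ p) / (p + 1) := by
  rw [zkForce, Real.rpow_add' hs (by linarith), Real.rpow_one]
  field_simp [show p + 1 ≠ 0 by linarith]

lemma zkPotential_eq (hp : -1 < p) (hs : 0 ≤ s) :
    zkPotential c p s =
      s ^ 2 * (2 * s ^ p - (p + 1) * (p + 2) * c) / (2 * (p + 1) * (p + 2)) := by
  rw [zkPotential, Real.rpow_add' hs (by linarith), Real.rpow_two]
  field_simp [show p + 1 ≠ 0 by linarith, show p + 2 ≠ 0 by linarith]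
  ring

lemma zkCritical_nonneg (hc : 0 ≤ c) (hp : -1 < p) : 0 ≤ zkCritical c p :=
  Real.rpow_nonneg (mul_nonneg (by linarith) hc) _

lemma zkCritical_rpow (hc : 0 ≤ c) (hp : 0 < p) : zkCritical c p ^ p = (p + 1) * c :=
  Real.rpow_inv_rpow (by positivity) hp.ne'

lemma zkForce_pos (hc : 0 ≤ c) (hp : 0 < p) (hs : 0 < s) (hsS : s < zkCritical c p) :
    0 < zkForce c p s := by
  have : s ^ p < (p + 1) * c := by
    rw [← zkCritical_rpow hc hp]
    exact Real.rpow_lt_rpow hs.le hsS hp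
  rw [zkForce_eq (by linarith) hs.le]
  exact div_pos (mul_pos hs (by linarith)) (by linarith)

lemma zkForce_neg (hc : 0 ≤ c) (hp : 0 < p) (hsS : zkCritical c p < s) :
    zkForce c p s < 0 := by
  have hS := zkCritical_nonneg hc (by linarith : -1 < p)
  have : (p + 1) * c < s ^ p := by
    rw [← zkCritical_rpow hc hp]
    exact Real.rpow_lt_rpow hS hsS hp
  rw [zkForce_eq (by linarith) (hS.trans hsS.le)]
  exact div_neg_of_neg_of_pos (mul_neg_of_pos_of_neg (hS.trans_lt hsS) (by linarith))
    (by linarith)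

lemma strictAntiOn_zkPotential (hc : 0 ≤ c) (hp : 0 < p) :
    StrictAntiOn (zkPotential c p) (Icc 0 (zkCritical c p)) :=
  strictAntiOn_of_hasDerivWithinAt_neg (convex_Icc _ _)
    (HasDerivAt.continuousOn fun s _ ↦ hasDerivAt_zkPotential (by linarith) s)
    (fun s _ ↦ (hasDerivAt_zkPotential (by linarith) s).hasDerivWithinAt) fun s hs ↦ by
      rw [interior_Icc] at hs
      exact neg_neg_of_pos (zkForce_pos hc hp hs.1 hs.2)

lemma strictMonoOn_zkPotential (hc : 0 ≤ c) (hp : 0 < p) :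
    StrictMonoOn (zkPotential c p) (Ici (zkCritical c p)) :=
  strictMonoOn_of_hasDerivWithinAt_pos (convex_Ici _)
    (HasDerivAt.continuousOn fun s _ ↦ hasDerivAt_zkPotential (by linarith) s)
    (fun s _ ↦ (hasDerivAt_zkPotential (by linarith) s).hasDerivWithinAt) fun s hs ↦ by
      rw [interior_Ici] at hs
      exact neg_pos_of_neg (zkForce_neg hc hp hs)

lemma zkPotential_zkCritical (hc : 0 ≤ c) (hp : 0 < p) :
    zkPotential c p (zkCritical c p) =
      -(p * (p + 1) ^ (2 / p) * c ^ ((p + 2) / p)) / (2 * (p + 2)) := by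
  have hsq : zkCritical c p ^ 2 = (p + 1) ^ (2 / p) * c ^ (2 / p) := by
    rw [zkCritical, ← Real.rpow_mul_natCast (by positivity), Real.mul_rpow (by linarith) hc]
    norm_num [div_eq_inv_mul]
  have hc' : c ^ ((p + 2) / p) = c * c ^ (2 / p) := by
    rw [show (p + 2) / p = 1 + 2 / p by field_simp, Real.rpow_add' hc (by positivity),
      Real.rpow_one]
  rw [zkPotential_eq (by linarith) (zkCritical_nonneg hc (by linarith)), zkCritical_rpow hc hp,
    hsq, hc']
  field_simp [show p + 1 ≠ 0 by linarith, show p + 2 ≠ 0 by linarith]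
  ring

lemma exists_zkPotential_eq (hc : 0 ≤ c) (hp : 0 < p)
    (hB₀ : zkPotential c p (zkCritical c p) < B) (hB : B < 0) :
    ∃ a b, 0 < a ∧ a < zkCritical c p ∧ zkCritical c p < b ∧
      zkPotential c p a = B ∧ zkPotential c p b = B := by
  have hS := zkCritical_nonneg hc (by linarith : -1 < p)
  have hcont : Continuous (zkPotential c p) := continuous_iff_continuousAt.mpr fun s ↦
    (hasDerivAt_zkPotential (by linarith) s).continuousAt
  have h₀ : zkPotential c p 0 = 0 := by
    rw [zkPotential_eq (by linarith) le_rfl]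
    ring
  obtain ⟨a, ha, hVa⟩ := intermediate_value_Ioo' hS hcont.continuousOn ⟨hB₀, by rwa [h₀]⟩
  obtain ⟨s, hSs, hs⟩ := ((eventually_ge_atTop (zkCritical c p)).and
    ((_root_.tendsto_rpow_atTop hp).eventually_ge_atTop ((p + 1) * (p + 2) * c / 2))).exists
  have hVs : 0 ≤ zkPotential c p s := by
    rw [zkPotential_eq (by linarith) (hS.trans hSs)]
    exact div_nonneg (mul_nonneg (sq_nonneg s) (by linarith)) (by positivity)
  obtain ⟨b, hb, hVb⟩ := intermediate_value_Ioo hSs hcont.continuousOn ⟨hB₀, hB.trans_le hVs⟩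
  exact ⟨a, b, ha.1, ha.2, hb.1, hVa, hVb⟩

lemma zkPotential_lt_of_mem_Ioo (hc : 0 ≤ c) (hp : 0 < p) {a b x : ℝ} (ha : 0 ≤ a)
    (haS : a ≤ zkCritical c p) (hSb : zkCritical c p ≤ b) (hVa : zkPotential c p a = B)
    (hVb : zkPotential c p b = B) (hx : x ∈ Ioo a b) : zkPotential c p x < B := by
  rcases le_total x (zkCritical c p) with h | h
  · exact hVa ▸ strictAntiOn_zkPotential hc hp ⟨ha, haS⟩ ⟨ha.trans hx.1.le, h⟩ hx.1
  · exact hVb ▸ strictMonoOn_zkPotential hc hp h hSb hx.2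

end ZakharovKuznetsov

/-- For every B with B₀ < B < 0 (where
B₀ = -p(p+1)^{2/p} c^{(p+2)/p}/(2(p+2))), there exists a nonconstant, everywhere positive,
periodic, C² solution φ of -φ'' + cφ - φ^{p+1}/(p+1) = 0 with energy E(φ, φ') ≡ B. -/
theorem stmt_2 (c p : ℝ) (hc : 0 < c) (hp : 0 < p) (B : ℝ)
    (hB0 : -(p * (p + 1) ^ (2 / p) * c ^ ((p + 2) / p)) / (2 * (p + 2)) < B)
    (hB : B < 0) :
    ∃ φ : ℝ → ℝ, ContDiff ℝ 2 φ ∧ (∀ x, 0 < φ x) ∧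
      (∃ L > 0, Function.Periodic φ L) ∧
      (∃ x y, φ x ≠ φ y) ∧
      (∀ x, -(deriv (deriv φ) x) + c * φ x - φ x ^ (p + 1) / (p + 1) = 0) ∧
      (∀ x, (deriv φ x) ^ 2 / 2 - c * (φ x) ^ 2 / 2
        + φ x ^ (p + 2) / ((p + 1) * (p + 2)) = B) := by
  obtain ⟨a, b, ha, haS, hSb, hVa, hVb⟩ :=
    exists_zkPotential_eq hc.le hp (by rwa [zkPotential_zkCritical hc.le hp]) hB
  obtain ⟨K, hK⟩ := (contDiff_zkForce (c := c) hp.le).contDiffOn.exists_lipschitzOnWith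
    one_ne_zero (convex_Icc a b) isCompact_Icc
  obtain ⟨φ, ψ, hφ, hψ, hφE, hper, hnc⟩ := exists_periodic_of_potential_well hK
    (fun x _ ↦ hasDerivAt_zkPotential (by linarith) x) (haS.trans hSb).le hVa hVb
    (fun x hx ↦ zkPotential_lt_of_mem_Ioo hc.le hp ha.le haS.le hSb.le hVa hVb hx)
    (zkForce_pos hc.le hp ha haS) (zkForce_neg hc.le hp hSb)
  have hφ' : deriv φ = ψ := funext fun t ↦ (hφ t).deriv
  have hφc : Continuous φ := continuous_iff_continuousAt.mpr fun t ↦ (hφ t).continuousAt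
  refine ⟨φ, contDiff_two_of_hasDerivAt hφ hψ ((contDiff_zkForce hp.le).continuous.comp hφc),
    fun x ↦ ha.trans_le (hφE x).1.1, hper, hnc, fun x ↦ ?_, fun x ↦ ?_⟩
  · rw [hφ', (hψ x).deriv, zkForce]
    ring
  · rw [hφ', ← (hφE x).2, zkPotential]
    ring
end

section
/- Let c > 0, p > 0, and let φ : ℝ → ℝ be a nonconstant, everywhere positive, periodic, twice continuously differentiable solution of -φ'' + cφ - φ^{p+1}/(p+1) = 0 with minimal period L and energy E(φ, φ') ≡ B. Set b₁ = min_{x∈[0,L]} φ(x) and b₂ = max_{x∈[0,L]} φ(x). Then L = 2 ∫_{b₁}^{b₂} dh / √( -2h^{p+2}/((p+1)(p+2)) + ch² + 2B ), where the (improper) integral converges. -/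
/-!
Write g(h) = c h - h^{p+1}/(p+1) and F(h) = -2h^{p+2}/((p+1)(p+2)) + c h² + 2B, so that φ'' = g(φ),
φ'² = F(φ) and F' = 2g. On the range [b₁, b₂] ⊂ (0, ∞) the force g is Lipschitz, so a solution is
determined by (φ, φ') at a single time. Hence φ is symmetric about each turning point (φ' = 0), and
two turning points a < b give the period 2(b - a); for consecutive visits of the minimum and the
maximum this is less than 2L, hence equals L. In between, φ' cannot vanish: a zero of F inside
(b₁, b₂) would be a minimum of F ≥ 0, hence a zero of g, i.e. an equilibrium. So φ maps (a, b)
bijectively onto (b₁, b₂), and the substitution h = φ(t), dh = √F(h) dt, gives b - a = ∫ dh / √F.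
-/

open Set MeasureTheory Function
open scoped NNReal

theorem ODE_solution_unique_of_second_order {g : ℝ → ℝ} {K : ℝ≥0} {s : Set ℝ}
    (hg : LipschitzOnWith K g s) {f₁ d₁ f₂ d₂ : ℝ → ℝ}
    (hf₁ : ∀ t, HasDerivAt f₁ (d₁ t) t) (hd₁ : ∀ t, HasDerivAt d₁ (g (f₁ t)) t)
    (hs₁ : ∀ t, f₁ t ∈ s)
    (hf₂ : ∀ t, HasDerivAt f₂ (d₂ t) t) (hd₂ : ∀ t, HasDerivAt d₂ (g (f₂ t)) t)
    (hs₂ : ∀ t, f₂ t ∈ s)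
    {t₀ : ℝ} (h₀ : f₁ t₀ = f₂ t₀) (h₀' : d₁ t₀ = d₂ t₀) : f₁ = f₂ := by
  have hv : LipschitzOnWith (max 1 (K * 1)) (fun y : ℝ × ℝ => (y.2, g y.1)) (s ×ˢ univ) :=
    LipschitzWith.prod_snd.lipschitzOnWith.prodMk
      (hg.comp LipschitzWith.prod_fst.lipschitzOnWith fun _ hy => hy.1)
  have h := ODE_solution_unique_univ (s := fun _ => s ×ˢ univ) (fun _ => hv)
    (f := fun t => (f₁ t, d₁ t)) (g := fun t => (f₂ t, d₂ t))
    (fun t => ⟨(hf₁ t).prodMk (hd₁ t), hs₁ t, trivial⟩)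
    (fun t => ⟨(hf₂ t).prodMk (hd₂ t), hs₂ t, trivial⟩) (Prod.ext h₀ h₀')
  exact funext fun t => congrArg Prod.fst (congrFun h t)

theorem exists_Ioo_forall_ne_of_apply_eq {α β : Type*} [ConditionallyCompleteLinearOrder α]
    [TopologicalSpace α] [OrderTopology α] [TopologicalSpace β] [T1Space β] {f : α → β}
    (hf : Continuous f) {u v : β} (huv : u ≠ v) {x y : α} (hxy : x ≤ y)
    (hx : f x = u) (hy : f y = v) :
    ∃ a b, x ≤ a ∧ a < b ∧ b ≤ y ∧ f a = u ∧ f b = v ∧ ∀ t ∈ Ioo a b, f t ≠ u ∧ f t ≠ v := by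
  set S := Icc x y ∩ f ⁻¹' {v}
  have hS : IsClosed S := isClosed_Icc.inter (isClosed_singleton.preimage hf)
  have hbS : sInf S ∈ S := hS.csInf_mem ⟨y, ⟨hxy, le_rfl⟩, hy⟩ ⟨x, fun _ ht => ht.1.1⟩
  set b := sInf S
  set T := Icc x b ∩ f ⁻¹' {u}
  have hT : IsClosed T := isClosed_Icc.inter (isClosed_singleton.preimage hf)
  have haT : sSup T ∈ T := hT.csSup_mem ⟨x, ⟨le_rfl, hbS.1.1⟩, hx⟩ ⟨b, fun _ ht => ht.1.2⟩
  set a := sSup T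
  have hab : a < b := haT.1.2.lt_of_ne fun h => huv (haT.2.symm.trans (h ▸ hbS.2))
  refine ⟨a, b, haT.1.1, hab, hbS.1.2, haT.2, hbS.2, fun t ht => ⟨fun htu => ?_, fun htv => ?_⟩⟩
  · exact ht.1.not_ge (le_csSup ⟨b, fun _ hs => hs.1.2⟩ ⟨⟨haT.1.1.trans ht.1.le, ht.2.le⟩, htu⟩)
  · exact ht.2.not_ge (csInf_le ⟨x, fun _ hs => hs.1.1⟩
      ⟨⟨haT.1.1.trans ht.1.le, ht.2.le.trans hbS.1.2⟩, htv⟩)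

section SecondOrderAutonomous

variable {g φ φ' : ℝ → ℝ} {K : ℝ≥0} (hg : LipschitzOnWith K g (range φ))
  (hφ : ∀ t, HasDerivAt φ (φ' t) t) (hφ' : ∀ t, HasDerivAt φ' (g (φ t)) t)
include hg hφ hφ'

theorem apply_eq_of_deriv_eq_zero_of_apply_eq_zero {a : ℝ} (ha : φ' a = 0) (hga : g (φ a) = 0)
    (t : ℝ) : φ t = φ a := by
  have h := ODE_solution_unique_of_second_order hg hφ hφ' mem_range_self
    (f₂ := fun _ => φ a) (d₂ := fun _ => 0) (fun _ => hasDerivAt_const _ _)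
    (fun _ => by rw [hga]; exact hasDerivAt_const _ _) (fun _ => mem_range_self a) (t₀ := a) rfl ha
  exact congrFun h t

theorem apply_two_mul_sub_of_deriv_eq_zero {a : ℝ} (ha : φ' a = 0) (t : ℝ) :
    φ (2 * a - t) = φ t := by
  have h := ODE_solution_unique_of_second_order hg
    (fun t => (hφ (2 * a - t)).comp_const_sub (2 * a) t)
    (fun t => by simpa using ((hφ' (2 * a - t)).comp_const_sub (2 * a) t).fun_neg)
    (fun _ => mem_range_self _) hφ hφ' mem_range_self (t₀ := a) (by ring_nf) (by ring_nf; simp [ha])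
  exact congrFun h t

theorem periodic_two_mul_sub_of_deriv_eq_zero {a b : ℝ} (ha : φ' a = 0) (hb : φ' b = 0) :
    Periodic φ (2 * (b - a)) := fun t => by
  rw [← apply_two_mul_sub_of_deriv_eq_zero hg hφ hφ' ha t,
    ← apply_two_mul_sub_of_deriv_eq_zero hg hφ hφ' hb (2 * a - t)]
  ring_nf

theorem deriv_ne_zero_of_mem_Ioo {F : ℝ → ℝ} {b₁ b₂ : ℝ} (hrange : range φ = Icc b₁ b₂)
    (hE : ∀ t, φ' t ^ 2 = F (φ t)) (hF : ∀ h ∈ Ioo b₁ b₂, HasDerivAt F (2 * g h) h)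
    {t : ℝ} (ht : φ t ∈ Ioo b₁ b₂) : φ' t ≠ 0 := by
  intro h0
  have hF_nonneg : ∀ h ∈ Icc b₁ b₂, 0 ≤ F h := by
    rw [← hrange]
    rintro _ ⟨s, rfl⟩
    exact hE s ▸ sq_nonneg _
  have hmin : IsLocalMin F (φ t) := by
    filter_upwards [Icc_mem_nhds ht.1 ht.2] with h hh
    rw [← hE, h0]
    simpa using hF_nonneg h hh
  have hg0 : g (φ t) = 0 := by
    simpa using hmin.hasDerivAt_eq_zero (hF _ ht)
  obtain ⟨s, hs⟩ : b₁ ∈ range φ := hrange ▸ left_mem_Icc.2 (ht.1.trans ht.2).le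
  exact ht.1.ne (hs ▸ (apply_eq_of_deriv_eq_zero_of_apply_eq_zero hg hφ hφ' h0 hg0 s))

end SecondOrderAutonomous

theorem integrableOn_inv_sqrt_image_and_integral_eq {φ φ' F : ℝ → ℝ} {a b : ℝ} (hab : a ≤ b)
    (hφ : ∀ t ∈ Ioo a b, HasDerivAt φ (φ' t) t) (hE : ∀ t ∈ Ioo a b, φ' t ^ 2 = F (φ t))
    (hne : ∀ t ∈ Ioo a b, φ' t ≠ 0) :
    IntegrableOn (fun h => 1 / √(F h)) (φ '' Ioo a b) ∧
      ∫ h in φ '' Ioo a b, 1 / √(F h) = b - a := by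
  have hinj : InjOn φ (Ioo a b) := by
    intro x hx y hy hxy
    by_contra hxy'
    wlog hlt : x < y generalizing x y
    · exact this hy hx hxy.symm (Ne.symm hxy') ((not_lt.1 hlt).lt_of_ne (Ne.symm hxy'))
    have hsub : Icc x y ⊆ Ioo a b := Icc_subset_Ioo hx.1 hy.2
    obtain ⟨z, hz, hz0⟩ := exists_hasDerivAt_eq_zero hlt
      (fun z hz => (hφ z (hsub hz)).continuousAt.continuousWithinAt) hxy
      (fun z hz => hφ z (hsub (Ioo_subset_Icc_self hz)))
    exact hne z (hsub (Ioo_subset_Icc_self hz)) hz0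
  have hderiv : ∀ t ∈ Ioo a b, HasDerivWithinAt φ (φ' t) (Ioo a b) t :=
    fun t ht => (hφ t ht).hasDerivWithinAt
  have hone : EqOn (fun t => |φ' t| • (1 / √(F (φ t)))) (fun _ => 1) (Ioo a b) := by
    intro t ht
    simp [← hE t ht, Real.sqrt_sq_eq_abs, hne t ht]
  constructor
  · rw [integrableOn_image_iff_integrableOn_abs_deriv_smul measurableSet_Ioo hderiv hinj]
    exact (integrableOn_const measure_Ioo_lt_top.ne).congr_fun hone.symm measurableSet_Ioo
  · rw [integral_image_eq_integral_abs_deriv_smul measurableSet_Ioo hderiv hinj,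
      setIntegral_congr_fun measurableSet_Ioo hone]
    simp [hab]

theorem period_eq_two_mul_integral_inv_sqrt {g φ φ' F : ℝ → ℝ} {K : ℝ≥0} {b₁ b₂ L : ℝ}
    (hφ : ∀ t, HasDerivAt φ (φ' t) t) (hφ' : ∀ t, HasDerivAt φ' (g (φ t)) t)
    (hrange : range φ = Icc b₁ b₂) (hb : b₁ < b₂) (hg : LipschitzOnWith K g (Icc b₁ b₂))
    (hE : ∀ t, φ' t ^ 2 = F (φ t)) (hF : ∀ h ∈ Ioo b₁ b₂, HasDerivAt F (2 * g h) h)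
    (hL : 0 < L) (hper : Periodic φ L) (hmin : ∀ L', 0 < L' → Periodic φ L' → L ≤ L') :
    IntegrableOn (fun h => 1 / √(F h)) (Ioo b₁ b₂) ∧ L = 2 * ∫ h in Ioo b₁ b₂, 1 / √(F h) := by
  rw [← hrange] at hg
  have hcont : Continuous φ := continuous_iff_continuousAt.2 fun t => (hφ t).continuousAt
  have hmem : ∀ t, φ t ∈ Icc b₁ b₂ := fun t => hrange ▸ mem_range_self t
  obtain ⟨x₁, hx₁⟩ : b₁ ∈ range φ := hrange ▸ left_mem_Icc.2 hb.le
  obtain ⟨x₂, hx₂⟩ : b₂ ∈ range φ := hrange ▸ right_mem_Icc.2 hb.le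
  obtain ⟨y, hy, hx₂y⟩ := hper.exists_mem_Ico hL x₂ x₁
  obtain ⟨a, b, hx₁a, hab, hby, hφa, hφb, hφ_between⟩ :=
    exists_Ioo_forall_ne_of_apply_eq hcont hb.ne hy.1 hx₁ (hx₂y ▸ hx₂)
  have hφ'a : φ' a = 0 :=
    IsLocalMin.hasDerivAt_eq_zero (.of_forall fun t => hφa ▸ (hmem t).1) (hφ a)
  have hφ'b : φ' b = 0 :=
    IsLocalMax.hasDerivAt_eq_zero (.of_forall fun t => hφb ▸ (hmem t).2) (hφ b)
  have hL_eq : L = 2 * (b - a) := by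
    have hT := periodic_two_mul_sub_of_deriv_eq_zero hg hφ hφ' hφ'a hφ'b
    have hle := hmin _ (by linarith) hT
    by_contra hne
    have := hmin _ (by linarith [hle.lt_of_ne hne]) (hT.sub_period hper)
    linarith [hy.2]
  have himage : φ '' Ioo a b = Ioo b₁ b₂ := by
    refine Subset.antisymm ?_ (hφa ▸ hφb ▸ intermediate_value_Ioo hab.le hcont.continuousOn)
    rintro _ ⟨t, ht, rfl⟩
    exact ⟨(hmem t).1.lt_of_ne (hφ_between t ht).1.symm, (hmem t).2.lt_of_ne (hφ_between t ht).2⟩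
  obtain ⟨hint, hval⟩ := integrableOn_inv_sqrt_image_and_integral_eq hab.le (fun t _ => hφ t)
    (fun t _ => hE t)
    (fun t ht => deriv_ne_zero_of_mem_Ioo hg hφ hφ' hrange hE hF (himage ▸ mem_image_of_mem φ ht))
  rw [himage] at hint hval
  exact ⟨hint, by rw [hval, hL_eq]⟩

theorem hasDerivAt_gzk_speedSq {c p B h : ℝ} (hp : p + 2 ≠ 0) (hh : 0 < h) :
    HasDerivAt (fun h => -(2 * h ^ (p + 2)) / ((p + 1) * (p + 2)) + c * h ^ 2 + 2 * B)
      (2 * (c * h - h ^ (p + 1) / (p + 1))) h := by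
  have hrpow := Real.hasDerivAt_rpow_const (p := p + 2) (Or.inl hh.ne')
  refine ((((hrpow.const_mul 2).neg.div_const ((p + 1) * (p + 2))).add
    ((hasDerivAt_pow 2 h).const_mul c)).add_const (2 * B)).congr_deriv ?_
  rw [show p + 2 - 1 = p + 1 by ring, mul_comm (p + 1), ← div_div, mul_left_comm, neg_div,
    mul_div_cancel_left₀ _ hp]
  push_cast
  ring

theorem exists_lipschitzOnWith_gzk_force (c p : ℝ) {b₁ b₂ : ℝ} (hb₁ : 0 < b₁) :
    ∃ K, LipschitzOnWith K (fun h => c * h - h ^ (p + 1) / (p + 1)) (Icc b₁ b₂) := by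
  refine ContDiffOn.exists_lipschitzOnWith (n := 1) (fun x hx => ?_) one_ne_zero
    (convex_Icc _ _) isCompact_Icc
  have hx : x ≠ 0 := (hb₁.trans_le hx.1).ne'
  exact ((contDiffAt_id.const_smul c).sub
    ((Real.contDiffAt_rpow_const_of_ne hx).div_const _)).contDiffWithinAt

theorem stmt_4_general (c p : ℝ) (hp : 0 < p) (φ : ℝ → ℝ) (L B : ℝ)
    (hφ : ContDiff ℝ 2 φ) (hpos : ∀ x, 0 < φ x)
    (hL : 0 < L) (hper : Function.Periodic φ L)
    (hmin : ∀ L', 0 < L' → Function.Periodic φ L' → L ≤ L')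
    (hnc : ∃ x y, φ x ≠ φ y)
    (hode : ∀ x, -(deriv (deriv φ) x) + c * φ x - φ x ^ (p + 1) / (p + 1) = 0)
    (hE : ∀ x, (deriv φ x) ^ 2 / 2 - c * (φ x) ^ 2 / 2
      + φ x ^ (p + 2) / ((p + 1) * (p + 2)) = B)
    (b₁ b₂ : ℝ) (hb₁ : b₁ = sInf (φ '' Set.Icc 0 L)) (hb₂ : b₂ = sSup (φ '' Set.Icc 0 L)) :
    MeasureTheory.IntegrableOn
      (fun h => 1 / Real.sqrt (-(2 * h ^ (p + 2)) / ((p + 1) * (p + 2)) + c * h ^ 2 + 2 * B))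
      (Set.Ioo b₁ b₂) ∧
    L = 2 * ∫ h in Set.Ioo b₁ b₂,
        1 / Real.sqrt (-(2 * h ^ (p + 2)) / ((p + 1) * (p + 2)) + c * h ^ 2 + 2 * B) := by
  have hφ₁ : Differentiable ℝ φ := hφ.differentiable two_ne_zero
  have hrange : range φ = Icc b₁ b₂ := by
    rw [hb₁, hb₂, ← ContinuousOn.image_Icc hL.le hφ₁.continuous.continuousOn,
      ← zero_add L, hper.image_Icc hL]
  have hb : b₁ < b₂ := by
    obtain ⟨x, y, hxy⟩ := hnc
    by_contra! h
    exact hxy (subsingleton_Icc_of_ge h (hrange ▸ mem_range_self x) (hrange ▸ mem_range_self y))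
  have hb₁_pos : 0 < b₁ := by
    obtain ⟨x, hx⟩ : b₁ ∈ range φ := hrange ▸ left_mem_Icc.2 hb.le
    exact hx ▸ hpos x
  obtain ⟨K, hK⟩ := exists_lipschitzOnWith_gzk_force c p hb₁_pos (b₂ := b₂)
  refine period_eq_two_mul_integral_inv_sqrt (fun x => (hφ₁ x).hasDerivAt)
    (fun x => ?_) hrange hb hK (fun x => ?_)
    (fun h hh => hasDerivAt_gzk_speedSq (by linarith) (hb₁_pos.trans hh.1)) hL hper hmin
  · rw [show c * φ x - φ x ^ (p + 1) / (p + 1) = deriv (deriv φ) x by linarith [hode x]]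
    exact (hφ.differentiable_deriv_two x).hasDerivAt
  · rw [← hE x]
    ring

/-- For a nonconstant, positive, periodic C² solution φ with minimal period L
and energy ≡ B, setting b₁ = min φ on [0,L] and b₂ = max φ on [0,L], the minimal period is
given by L = 2 ∫_{b₁}^{b₂} dh / √(-2h^{p+2}/((p+1)(p+2)) + ch² + 2B), the improper integral
being convergent. -/
theorem stmt_4 (c p : ℝ) (hc : 0 < c) (hp : 0 < p) (φ : ℝ → ℝ) (L B : ℝ)
    (hφ : ContDiff ℝ 2 φ) (hpos : ∀ x, 0 < φ x)
    (hL : 0 < L) (hper : Function.Periodic φ L)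
    (hmin : ∀ L', 0 < L' → Function.Periodic φ L' → L ≤ L')
    (hnc : ∃ x y, φ x ≠ φ y)
    (hode : ∀ x, -(deriv (deriv φ) x) + c * φ x - φ x ^ (p + 1) / (p + 1) = 0)
    (hE : ∀ x, (deriv φ x) ^ 2 / 2 - c * (φ x) ^ 2 / 2
      + φ x ^ (p + 2) / ((p + 1) * (p + 2)) = B)
    (b₁ b₂ : ℝ) (hb₁ : b₁ = sInf (φ '' Set.Icc 0 L)) (hb₂ : b₂ = sSup (φ '' Set.Icc 0 L)) :
    MeasureTheory.IntegrableOn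
      (fun h => 1 / Real.sqrt (-(2 * h ^ (p + 2)) / ((p + 1) * (p + 2)) + c * h ^ 2 + 2 * B))
      (Set.Ioo b₁ b₂) ∧
    L = 2 * ∫ h in Set.Ioo b₁ b₂,
        1 / Real.sqrt (-(2 * h ^ (p + 2)) / ((p + 1) * (p + 2)) + c * h ^ 2 + 2 * B) :=
  stmt_4_general c p hp φ L B hφ hpos hL hper hmin hnc hode hE b₁ b₂ hb₁ hb₂
end

section
/- Let c > 0 and p > 0 be real numbers. There exists a smooth, everywhere positive, not identically zero function φ̃ : ℝ → ℝ solving -φ̃'' + cφ̃ - φ̃^{p+1}/(p+1) = 0 on ℝ such that E(φ̃(x), φ̃'(x)) = 0 for all x and lim_{x→±∞} φ̃^{(n)}(x) = 0 for every n ∈ ℕ (the separatrix / solitary-wave solution). -/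
open Real Filter Polynomial

noncomputable def Dpoly (b r : ℝ) (q : Polynomial ℝ) : Polynomial ℝ :=
  Polynomial.C b * (Polynomial.C r * Polynomial.X * q
    + (1 - Polynomial.X ^ 2) * Polynomial.derivative q)

noncomputable def Fq (b r : ℝ) (q : Polynomial ℝ) : ℝ → ℝ :=
  fun x => Real.cosh (b * x) ^ r * q.eval (Real.tanh (b * x))

lemma hasDerivAt_Fq (b r : ℝ) (q : Polynomial ℝ) (x : ℝ) :
    HasDerivAt (Fq b r q) (Fq b r (Dpoly b r q) x) x := by
  have hK := Real.cosh_pos (b * x)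
  have h1 : HasDerivAt (fun x : ℝ => b * x) b x := by
    simpa using (hasDerivAt_id x).const_mul b
  have hcosh : HasDerivAt (fun x => Real.cosh (b * x)) (Real.sinh (b * x) * b) x :=
    (Real.hasDerivAt_cosh _).comp x h1
  have hsinh : HasDerivAt (fun x => Real.sinh (b * x)) (Real.cosh (b * x) * b) x :=
    (Real.hasDerivAt_sinh _).comp x h1
  have hrpow : HasDerivAt (fun x => Real.cosh (b * x) ^ r)
      (Real.sinh (b * x) * b * r * Real.cosh (b * x) ^ (r - 1)) x :=
    hcosh.rpow_const (Or.inl hK.ne')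
  have htanh : HasDerivAt (fun x => Real.tanh (b * x))
      ((Real.cosh (b*x) * b * Real.cosh (b*x) - Real.sinh (b*x) * (Real.sinh (b*x) * b))
        / Real.cosh (b*x) ^ 2) x := by
    simp only [Real.tanh_eq_sinh_div_cosh]
    exact hsinh.div hcosh hK.ne'
  have hpoly : HasDerivAt (fun x => q.eval (Real.tanh (b * x)))
      (q.derivative.eval (Real.tanh (b * x)) *
        ((Real.cosh (b*x) * b * Real.cosh (b*x) - Real.sinh (b*x) * (Real.sinh (b*x) * b))
          / Real.cosh (b*x) ^ 2)) x := by
    have := (q.hasDerivAt (Real.tanh (b * x))).comp x htanh; exact this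
  have hmul := hrpow.mul hpoly
  refine hmul.congr_deriv (Eq.symm ?_)
  have hT : Real.tanh (b * x) = Real.sinh (b * x) / Real.cosh (b * x) :=
    Real.tanh_eq_sinh_div_cosh _
  have hcs : Real.cosh (b*x) ^ 2 - Real.sinh (b*x) ^ 2 = 1 := Real.cosh_sq_sub_sinh_sq _
  have hsub : Real.cosh (b*x) ^ (r - 1) = Real.cosh (b*x) ^ r / Real.cosh (b*x) := by
    rw [Real.rpow_sub hK, Real.rpow_one]
  simp only [Fq, Dpoly, Polynomial.eval_mul, Polynomial.eval_add, Polynomial.eval_C,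
    Polynomial.eval_X, Polynomial.eval_pow, Polynomial.eval_one, Polynomial.eval_sub,
    hsub, hT]
  field_simp

lemma abs_tanh_le_one (y : ℝ) : |Real.tanh y| ≤ 1 := by
  have hK := Real.cosh_pos y
  have hcs : Real.cosh y ^ 2 - Real.sinh y ^ 2 = 1 := Real.cosh_sq_sub_sinh_sq y
  rw [Real.tanh_eq_sinh_div_cosh, abs_div, abs_of_pos hK, div_le_one hK]
  nlinarith [abs_nonneg (Real.sinh y), sq_abs (Real.sinh y)]

lemma tendsto_cosh_comp {b : ℝ} (hb : 0 < b) :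
    Tendsto (fun x => Real.cosh (b * x)) atTop atTop ∧
    Tendsto (fun x => Real.cosh (b * x)) atBot atTop := by
  have h1 : Tendsto (fun y : ℝ => Real.exp y / 2) atTop atTop :=
    Real.tendsto_exp_atTop.atTop_div_const two_pos
  have hcosh : Tendsto Real.cosh atTop atTop := by
    refine tendsto_atTop_mono (fun y => ?_) h1
    rw [Real.cosh_eq]
    have := Real.exp_pos (-y); linarith
  have htop : Tendsto (fun x : ℝ => b * x) atTop atTop :=
    Tendsto.const_mul_atTop hb tendsto_id
  have hbot : Tendsto (fun x : ℝ => b * x) atBot atBot :=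
    Tendsto.const_mul_atBot hb tendsto_id
  have hcoshbot : Tendsto Real.cosh atBot atTop := by
    have : Tendsto (fun y : ℝ => Real.cosh (-y)) atTop atTop := by
      simpa [Real.cosh_neg] using hcosh
    exact (this.comp tendsto_neg_atBot_atTop).congr (by simp)
  exact ⟨hcosh.comp htop, hcoshbot.comp hbot⟩

lemma tendsto_Fq {b r : ℝ} (hb : 0 < b) (hr : r < 0) (q : Polynomial ℝ) :
    Tendsto (Fq b r q) atTop (nhds 0) ∧ Tendsto (Fq b r q) atBot (nhds 0) := by
  obtain ⟨C, hC⟩ := (isCompact_Icc (a := (-1:ℝ)) (b := 1)).exists_bound_of_continuousOn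
    (q.continuous_aeval.continuousOn)
  have hbound : ∀ x : ℝ, ‖Fq b r q x‖ ≤ C * Real.cosh (b * x) ^ r := by
    intro x
    have hK := Real.cosh_pos (b * x)
    have hu : (0:ℝ) < Real.cosh (b * x) ^ r := Real.rpow_pos_of_pos hK r
    have hmem : Real.tanh (b * x) ∈ Set.Icc (-1:ℝ) 1 := by
      have := abs_tanh_le_one (b * x); rw [abs_le] at this; exact this
    have := hC _ hmem
    rw [Fq, norm_mul, Real.norm_eq_abs, Real.norm_eq_abs, abs_of_pos hu]
    calc Real.cosh (b*x) ^ r * |q.eval (Real.tanh (b*x))|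
        ≤ Real.cosh (b*x) ^ r * C := by
          apply mul_le_mul_of_nonneg_left _ hu.le
          simpa using this
      _ = C * Real.cosh (b*x) ^ r := mul_comm _ _
  have hrpow : Tendsto (fun y : ℝ => y ^ r) atTop (nhds 0) := by
    have := tendsto_rpow_neg_atTop (neg_pos.mpr hr)
    simpa [neg_neg] using this
  obtain ⟨htop, hbot⟩ := tendsto_cosh_comp hb
  constructor
  · refine squeeze_zero_norm hbound ?_
    have := (hrpow.comp htop).const_mul C
    simpa using this
  · refine squeeze_zero_norm hbound ?_
    have := (hrpow.comp hbot).const_mul C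
    simpa using this



/-- Existence of the separatrix (solitary-wave) solution: a smooth, everywhere
positive, not identically zero solution φ̃ of -φ̃'' + cφ̃ - φ̃^{p+1}/(p+1) = 0 with energy ≡ 0
all of whose derivatives tend to 0 at ±∞. -/
theorem stmt_5 (c p : ℝ) (hc : 0 < c) (hp : 0 < p) :
    ∃ φ : ℝ → ℝ, ContDiff ℝ (⊤ : ℕ∞) φ ∧ (∀ x, 0 < φ x) ∧ φ ≠ 0 ∧
      (∀ x, -(deriv (deriv φ) x) + c * φ x - φ x ^ (p + 1) / (p + 1) = 0) ∧
      (∀ x, (deriv φ x) ^ 2 / 2 - c * (φ x) ^ 2 / 2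
        + φ x ^ (p + 2) / ((p + 1) * (p + 2)) = 0) ∧
      (∀ n : ℕ, Filter.Tendsto (iteratedDeriv n φ) Filter.atTop (nhds 0) ∧
        Filter.Tendsto (iteratedDeriv n φ) Filter.atBot (nhds 0)) := by
  have hs : (0:ℝ) < Real.sqrt c := Real.sqrt_pos.mpr hc
  have hs2 : Real.sqrt c ^ 2 = c := Real.sq_sqrt hc.le
  set s : ℝ := Real.sqrt c with hsdef
  set b : ℝ := p * s / 2 with hbdef
  set r : ℝ := -2 / p with hrdef
  have hb : 0 < b := by rw [hbdef]; positivity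
  have hr : r < 0 := by rw [hrdef]; exact div_neg_of_neg_of_pos (by norm_num) hp
  set M : ℝ := c * (p + 1) * (p + 2) / 2 with hMdef
  have hM : 0 < M := by rw [hMdef]; positivity
  set a : ℝ := M ^ (1 / p) with hadef
  have ha : 0 < a := Real.rpow_pos_of_pos hM _
  have hap : a ^ p = M := by
    rw [hadef, ← Real.rpow_mul hM.le, one_div, inv_mul_cancel₀ hp.ne', Real.rpow_one]
  set φ : ℝ → ℝ := Fq b r (Polynomial.C a) with hφdef
  have hφx : ∀ x, φ x = a * Real.cosh (b * x) ^ r := by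
    intro x; simp [hφdef, Fq, mul_comm]
  have hpos : ∀ x, 0 < φ x := by
    intro x
    rw [hφx]
    exact mul_pos ha (Real.rpow_pos_of_pos (Real.cosh_pos _) r)
  have hderiv : ∀ q : Polynomial ℝ, deriv (Fq b r q) = Fq b r (Dpoly b r q) :=
    fun q => funext fun x => (hasDerivAt_Fq b r q x).deriv
  have hd1 : ∀ x, deriv φ x = a * b * r * (Real.cosh (b*x) ^ r * Real.tanh (b*x)) := by
    intro x
    rw [hφdef, hderiv]
    simp [Fq, Dpoly]
    ring
  have hd2 : ∀ x, deriv (deriv φ) x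
      = a * b^2 * r * (Real.cosh (b*x) ^ r * (r * Real.tanh (b*x)^2 + (1 - Real.tanh (b*x)^2))) := by
    intro x
    rw [hφdef, hderiv, hderiv]
    simp [Fq, Dpoly]
    ring
  have hT2 : ∀ x, (Real.tanh (b*x))^2
      = ((Real.cosh (b*x))^2 - 1) / (Real.cosh (b*x))^2 := by
    intro x
    have hK := Real.cosh_pos (b*x)
    have hcs : Real.cosh (b*x) ^ 2 - Real.sinh (b*x) ^ 2 = 1 := Real.cosh_sq_sub_sinh_sq _
    rw [Real.tanh_eq_sinh_div_cosh]
    rw [div_pow, eq_div_iff (by positivity), div_mul_cancel₀ _ (ne_of_gt (pow_pos hK 2))]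
    linarith
  have hrp1 : r * (p + 1) = r - 2 := by
    rw [hrdef]; field_simp; ring
  have hpow1 : ∀ x, φ x ^ (p + 1)
      = (M * a) * (Real.cosh (b*x) ^ r / Real.cosh (b*x) ^ 2) := by
    intro x
    have hK := Real.cosh_pos (b*x)
    have hu : (0:ℝ) < Real.cosh (b*x) ^ r := Real.rpow_pos_of_pos hK r
    rw [hφx, Real.mul_rpow ha.le hu.le, ← Real.rpow_natCast (Real.cosh (b*x)) 2,
      ← Real.rpow_mul hK.le, hrp1, Real.rpow_sub hK]
    rw [show a ^ (p+1) = a ^ p * a by rw [Real.rpow_add ha, Real.rpow_one], hap]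
    push_cast
    ring
  have hpow2 : ∀ x, φ x ^ (p + 2)
      = (M * a^2) * ((Real.cosh (b*x) ^ r)^2 / Real.cosh (b*x) ^ 2) := by
    intro x
    rw [show (p + 2 : ℝ) = (p + 1) + 1 by ring, Real.rpow_add (hpos x), Real.rpow_one,
      hpow1 x, hφx]
    ring
  refine ⟨φ, ?_, hpos, ?_, ?_, ?_, ?_⟩
  · have hfun : φ = fun x => a * Real.cosh (b * x) ^ r := funext hφx
    rw [hfun, contDiff_iff_contDiffAt]
    intro x
    have h1 : ContDiff ℝ (⊤ : ℕ∞) (fun x : ℝ => Real.cosh (b * x)) :=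
      Real.contDiff_cosh.comp (contDiff_const.mul contDiff_id)
    exact contDiffAt_const.mul (h1.contDiffAt.rpow_const_of_ne (Real.cosh_pos _).ne')
  · intro h
    exact (hpos 0).ne' (congrFun h 0)
  · -- ODE
    intro x
    have hK := Real.cosh_pos (b*x)
    have hu : (0:ℝ) < Real.cosh (b*x) ^ r := Real.rpow_pos_of_pos hK r
    rw [hd2, hpow1 x, hφx, hMdef, hT2 x, hbdef, hrdef, show c = s^2 from hs2.symm]
    field_simp
    ring
  · -- energy
    intro x
    have hK := Real.cosh_pos (b*x)
    have hu : (0:ℝ) < Real.cosh (b*x) ^ r := Real.rpow_pos_of_pos hK r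
    rw [hd1, hpow2 x, hφx, hMdef,
      show (a*b*r*(Real.cosh (b*x)^r*Real.tanh (b*x)))^2
        = (a*b*r)^2*((Real.cosh (b*x)^r)^2 * Real.tanh (b*x)^2) by ring,
      hT2 x, hbdef, hrdef, show c = s^2 from hs2.symm]
    field_simp
    ring
  · intro n
    have hrep : iteratedDeriv n φ = Fq b r ((Dpoly b r)^[n] (Polynomial.C a)) := by
      induction n with
      | zero => simp [hφdef, iteratedDeriv_zero]
      | succ k ih =>
        rw [iteratedDeriv_succ, ih, hderiv, Function.iterate_succ_apply']
    rw [hrep]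
    exact tendsto_Fq hb hr _
end

section
/- Let c > 0 and p > 0 be real numbers. For every M > 0 there exists δ > 0 such that every nonconstant, everywhere positive, periodic, twice continuously differentiable solution φ : ℝ → ℝ of -φ'' + cφ - φ^{p+1}/(p+1) = 0 whose energy satisfies E(φ, φ') ≡ B for some B ∈ (-δ, 0) has minimal period greater than M (the period tends to +∞ as B → 0⁻). -/
/-- The minimal period tends to +∞ as the energy level B → 0⁻: for every M > 0
there is δ > 0 such that every nonconstant, positive, periodic C² solution with energy
≡ B ∈ (-δ, 0) has minimal period greater than M. -/
theorem stmt_6 (c p : ℝ) (hc : 0 < c) (hp : 0 < p) :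
    ∀ M > 0, ∃ δ > 0, ∀ (φ : ℝ → ℝ) (B L : ℝ),
      ContDiff ℝ 2 φ → (∀ x, 0 < φ x) →
      0 < L → Function.Periodic φ L →
      (∀ L', 0 < L' → Function.Periodic φ L' → L ≤ L') →
      (∃ x y, φ x ≠ φ y) →
      (∀ x, -(deriv (deriv φ) x) + c * φ x - φ x ^ (p + 1) / (p + 1) = 0) →
      (∀ x, (deriv φ x) ^ 2 / 2 - c * (φ x) ^ 2 / 2
        + φ x ^ (p + 2) / ((p + 1) * (p + 2)) = B) →
      -δ < B → B < 0 → M < L := by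
  intro M hM
  set sc : ℝ := Real.sqrt c with hscdef
  have hsc : 0 < sc := Real.sqrt_pos.2 hc
  have hsc2 : sc ^ 2 = c := Real.sq_sqrt hc.le
  set a₀ : ℝ := (c * (p + 1)) ^ (1 / p) with ha₀def
  have hcp1 : (0:ℝ) < c * (p + 1) := by positivity
  have ha₀ : 0 < a₀ := Real.rpow_pos_of_pos hcp1 _
  set m₀ : ℝ := a₀ * Real.exp (-(sc * (M + 1))) with hm₀def
  have hm₀ : 0 < m₀ := by positivity
  refine ⟨c * p / (2 * (p + 2)) * m₀ ^ 2, by positivity, ?_⟩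
  intro φ B L hφ hpos hL hper _hminper _hnc hODE hE hBδ hB
  have hdiff : Differentiable ℝ φ := hφ.differentiable (by norm_num)
  -- formula for the second derivative
  have hdd : ∀ x, deriv (deriv φ) x = c * φ x - φ x ^ (p + 1) / (p + 1) := by
    intro x; have := hODE x; linarith
  -- deriv φ is periodic
  have hperd : ∀ x, deriv φ (x + L) = deriv φ x := by
    intro x
    have hfun : (fun y => φ (y + L)) = φ := funext fun y => hper y
    calc deriv φ (x + L) = deriv (fun y => φ (y + L)) x := (deriv_comp_add_const ..).symm
    _ = deriv φ x := by rw [hfun]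
  -- rpow split: φ x ^ (p+1) = φ x ^ p * φ x
  have hsplit : ∀ x, φ x ^ (p + 1) = φ x ^ p * φ x := by
    intro x
    rw [Real.rpow_add (hpos x), Real.rpow_one]
  -- there is a point where φ z ^ p ≥ c (p+1)
  have hzhi : ∃ z, c * (p + 1) ≤ φ z ^ p := by
    by_contra h
    push_neg at h
    have hpos2 : ∀ x, 0 < deriv (deriv φ) x := by
      intro x
      rw [hdd x]
      have h1 : φ x ^ (p + 1) < c * (p + 1) * φ x := by
        rw [hsplit x]
        exact mul_lt_mul_of_pos_right (h x) (hpos x)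
      have hp1 : (0:ℝ) < p + 1 := by linarith
      rw [sub_pos, div_lt_iff₀ hp1]
      calc φ x ^ (p + 1) < c * (p + 1) * φ x := h1
      _ = c * φ x * (p + 1) := by ring
    have hmono : StrictMono (deriv φ) := strictMono_of_deriv_pos hpos2
    have := hmono (show (0:ℝ) < 0 + L by linarith)
    rw [hperd 0] at this
    exact lt_irrefl _ this
  -- there is a point where φ z ^ p ≤ c (p+1)
  have hzlo : ∃ z, φ z ^ p ≤ c * (p + 1) := by
    by_contra h
    push_neg at h
    have hneg2 : ∀ x, deriv (deriv φ) x < 0 := by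
      intro x
      rw [hdd x]
      have h1 : c * (p + 1) * φ x < φ x ^ (p + 1) := by
        rw [hsplit x]
        exact mul_lt_mul_of_pos_right (h x) (hpos x)
      have hp1 : (0:ℝ) < p + 1 := by linarith
      rw [sub_neg, lt_div_iff₀ hp1]
      calc c * φ x * (p + 1) = c * (p + 1) * φ x := by ring
      _ < φ x ^ (p + 1) := h1
    have hmono : StrictAnti (deriv φ) := strictAnti_of_deriv_neg hneg2
    have := hmono (show (0:ℝ) < 0 + L by linarith)
    rw [hperd 0] at this
    exact lt_irrefl _ this
  obtain ⟨z, hz⟩ := hzhi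
  obtain ⟨z', hz'⟩ := hzlo
  -- global minimum of φ
  obtain ⟨x₀, hx₀mem, hx₀min⟩ :=
    isCompact_Icc.exists_isMinOn (Set.nonempty_Icc.2 hL.le)
      (hdiff.continuous.continuousOn (s := Set.Icc 0 L))
  have hglobal : ∀ w, φ x₀ ≤ φ w := by
    intro w
    obtain ⟨y, hy, hyw⟩ := hper.exists_mem_Ico₀ hL w
    rw [hyw]
    exact hx₀min (Set.mem_Icc.2 ⟨hy.1, hy.2.le⟩)
  set m : ℝ := φ x₀ with hmdef
  have hm : 0 < m := hpos x₀
  -- deriv φ x₀ = 0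
  have hd0 : deriv φ x₀ = 0 := by
    have : IsLocalMin φ x₀ := Filter.Eventually.of_forall hglobal
    exact this.deriv_eq_zero
  -- m ^ p ≤ c (p+1)
  have hmp : m ^ p ≤ c * (p + 1) :=
    le_trans (Real.rpow_le_rpow hm.le (hglobal z') hp.le) hz'
  -- m ^ (p+2) ≤ c (p+1) m²
  have hmp2 : m ^ (p + 2) ≤ c * (p + 1) * m ^ 2 := by
    have h1 : m ^ (p + 2) = m ^ p * m ^ 2 := by
      rw [Real.rpow_add hm, show ((2:ℝ) = ((2:ℕ):ℝ)) by norm_num, Real.rpow_natCast]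
    rw [h1]
    exact mul_le_mul_of_nonneg_right hmp (by positivity)
  -- energy at x₀: m² < m₀²
  have hEx₀ := hE x₀
  rw [hd0] at hEx₀
  have hmm₀ : m < m₀ := by
    have hp1 : (0:ℝ) < p + 1 := by linarith
    have hp2 : (0:ℝ) < p + 2 := by linarith
    have key : m ^ (p+2) = ((p+1)*(p+2)) * (B + c * m^2 / 2) := by
      field_simp at hEx₀ ⊢
      linarith [hEx₀]
    have h2 : c * p / (2 * (p + 2)) * m ^ 2 ≤ -B := by
      rw [key] at hmp2
      rw [div_mul_eq_mul_div, div_le_iff₀ (by positivity)]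
      nlinarith [hmp2]
    have h3 : m ^ 2 < m₀ ^ 2 := by
      have hδ : -B < c * p / (2 * (p + 2)) * m₀ ^ 2 := by linarith
      have hcoef : (0:ℝ) < c * p / (2 * (p + 2)) := by positivity
      nlinarith [h2, hδ]
    exact lt_of_pow_lt_pow_left₀ 2 hm₀.le h3
  -- |deriv φ x| ≤ sc * φ x everywhere
  have hgrad : ∀ x, |deriv φ x| ≤ sc * φ x := by
    intro x
    have hEx := hE x
    have hrp : 0 < φ x ^ (p + 2) := Real.rpow_pos_of_pos (hpos x) _
    have hscφ : 0 ≤ sc * φ x := mul_nonneg hsc.le (hpos x).le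
    have hsq : (deriv φ x) ^ 2 ≤ (sc * φ x) ^ 2 := by
      have h1 : (sc * φ x) ^ 2 = c * φ x ^ 2 := by rw [mul_pow, hsc2]
      have h2 : 0 < φ x ^ (p + 2) / ((p + 1) * (p + 2)) :=
        div_pos hrp (by positivity)
      rw [h1]; linarith [hEx, h2, hB]
    exact abs_le_of_sq_le_sq hsq hscφ
  -- log ∘ φ is sc-Lipschitz
  set g : ℝ → ℝ := fun x => Real.log (φ x) with hgdef
  have hgderiv : ∀ x, HasDerivAt g ((φ x)⁻¹ * deriv φ x) x := by
    intro x
    exact (Real.hasDerivAt_log (hpos x).ne').comp x (hdiff x).hasDerivAt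
  have hgbound : ∀ x ∈ (Set.univ : Set ℝ), ‖deriv g x‖ ≤ sc := by
    intro x _
    rw [(hgderiv x).deriv, Real.norm_eq_abs, abs_mul, abs_inv,
      abs_of_pos (hpos x)]
    rw [inv_mul_le_iff₀ (hpos x)]
    calc |deriv φ x| ≤ sc * φ x := hgrad x
    _ = φ x * sc := mul_comm _ _
  -- z reduced into [0, L)
  obtain ⟨y, hy, hyz⟩ := hper.exists_mem_Ico₀ hL z
  have hlip : ‖g y - g x₀‖ ≤ sc * ‖y - x₀‖ :=
    convex_univ.norm_image_sub_le_of_norm_deriv_le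
      (fun x _ => (hgderiv x).differentiableAt) hgbound (Set.mem_univ x₀) (Set.mem_univ y)
  have hdist : ‖y - x₀‖ ≤ L := by
    rw [Real.norm_eq_abs, abs_le]
    constructor
    · have := hx₀mem.2; have := hy.1; linarith
    · have := hx₀mem.1; have := hy.2; linarith
  -- a₀ ≤ φ z
  have ha₀z : a₀ ≤ φ z := by
    have : a₀ ≤ (φ z ^ p) ^ (1 / p) := Real.rpow_le_rpow hcp1.le hz (by positivity)
    rwa [one_div, Real.rpow_rpow_inv (hpos z).le hp.ne'] at this
  -- chain of inequalities
  have hloga : Real.log a₀ ≤ g y := by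
    rw [hgdef]; simp only
    rw [← hyz]
    exact Real.log_le_log ha₀ ha₀z
  have hlogm : g x₀ < Real.log m₀ := Real.log_lt_log hm hmm₀
  have hlogm₀ : Real.log m₀ = Real.log a₀ - sc * (M + 1) := by
    rw [hm₀def, Real.log_mul ha₀.ne' (Real.exp_pos _).ne', Real.log_exp]
    ring
  have hfin : sc * (M + 1) < sc * L := by
    have h1 : g y - g x₀ ≤ sc * L := by
      calc g y - g x₀ ≤ ‖g y - g x₀‖ := le_abs_self _
      _ ≤ sc * ‖y - x₀‖ := hlip
      _ ≤ sc * L := mul_le_mul_of_nonneg_left hdist hsc.le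
    have h2 : Real.log a₀ - Real.log m₀ < g y - g x₀ := by
      have : Real.log a₀ - g y ≤ 0 := by linarith
      linarith
    rw [hlogm₀] at h2
    linarith
  have : M + 1 < L := lt_of_mul_lt_mul_left hfin hsc.le
  linarith
end

section
/- Let Y be a real Banach space, O ⊆ Y an open set containing 0, and T : O → Y a map with T(0) = 0. Suppose there is a continuous linear operator S : Y → Y with spectral radius r(S) = lim_{n→∞} ‖Sⁿ‖^{1/n} > 1, and constants q > 1, C > 0, r₀ > 0 such that ‖T(w) - S(w)‖ ≤ C‖w‖^q for all w ∈ O with ‖w‖ < r₀. Then 0 is an unstable fixed point of T. -/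
open Filter Finset

section aux
variable {Y : Type*} [NormedAddCommGroup Y] [NormedSpace ℝ Y]

private lemma pow_apply_add (S : Y →L[ℝ] Y) (a b : ℕ) (v : Y) :
    (S ^ a) ((S ^ b) v) = (S ^ (a + b)) v := by
  rw [pow_add]; rfl

private lemma keyA (S : Y →L[ℝ] Y) (r : ℝ)
    (hr : Tendsto (fun n : ℕ => ‖S ^ n‖ ^ (1 / (n : ℝ))) atTop (nhds r))
    (hr1 : 1 < r) (N₀ : ℕ) :
    ∃ N, N₀ ≤ N ∧ 1 ≤ N ∧ ∃ v : Y, ‖v‖ ≤ 1 ∧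
      (∀ n ≤ N, ‖(S ^ n) v‖ ≤ max 1 (‖S‖ / r) * r ^ n) ∧ r ^ N / 2 ≤ ‖(S ^ N) v‖ := by
  have hr0 : (0:ℝ) < r := lt_trans one_pos hr1
  by_contra hcon
  push_neg at hcon
  set N₁ := max N₀ 1 with hN₁
  have hN₁1 : 1 ≤ N₁ := le_max_right _ _
  -- the contraction property
  have H : ∀ N, N₁ ≤ N → ∀ (v : Y) (t : ℝ), 0 ≤ t →
      (∀ m < N, ‖(S ^ m) v‖ ≤ r ^ m * t) → ‖(S ^ N) v‖ ≤ r ^ N * t / 2 := by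
    intro N hN v t ht hp
    have hN1 : 1 ≤ N := le_trans hN₁1 hN
    rcases eq_or_lt_of_le ht with h0 | htpos
    · have hv0 : ‖v‖ ≤ 0 := by
        have := hp 0 (by omega); simpa [← h0] using this
      have : v = 0 := norm_le_zero_iff.mp hv0
      simp [this, map_zero]
      positivity
    · set v' := t⁻¹ • v with hv'
      have hp' : ∀ m < N, ‖(S ^ m) v'‖ ≤ r ^ m := by
        intro m hm
        rw [hv', map_smul, norm_smul, Real.norm_eq_abs, abs_of_pos (inv_pos.mpr htpos)]
        have := hp m hm
        rw [inv_mul_le_iff₀ htpos]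
        linarith [this]
      have hv'1 : ‖v'‖ ≤ 1 := by simpa using hp' 0 (by omega)
      have hupper : ∀ n ≤ N, ‖(S ^ n) v'‖ ≤ max 1 (‖S‖ / r) * r ^ n := by
        intro n hn
        rcases lt_or_eq_of_le hn with hlt | heq
        · calc ‖(S ^ n) v'‖ ≤ r ^ n := hp' n hlt
            _ ≤ max 1 (‖S‖ / r) * r ^ n := by
                nlinarith [le_max_left (1:ℝ) (‖S‖/r), pow_pos hr0 n]
        · subst heq
          obtain ⟨m, hm⟩ : ∃ m, n = m + 1 := ⟨n - 1, by omega⟩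
          subst hm
          have h1 : (S ^ (m+1)) v' = S ((S ^ m) v') := by rw [pow_succ']; rfl
          calc ‖(S ^ (m+1)) v'‖ = ‖S ((S ^ m) v')‖ := by rw [h1]
            _ ≤ ‖S‖ * ‖(S ^ m) v'‖ := S.le_opNorm _
            _ ≤ ‖S‖ * r ^ m := by
                apply mul_le_mul_of_nonneg_left (hp' m (by omega)) (norm_nonneg S)
            _ = (‖S‖ / r) * r ^ (m+1) := by field_simp; ring
            _ ≤ max 1 (‖S‖ / r) * r ^ (m+1) := by
                apply mul_le_mul_of_nonneg_right (le_max_right _ _) (by positivity)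
      have := hcon N (le_trans (le_max_left _ _) hN) hN1 v' hv'1 hupper
      have hvv : v = t • v' := by rw [hv', smul_inv_smul₀ (ne_of_gt htpos)]
      rw [hvv, map_smul, norm_smul, Real.norm_eq_abs, abs_of_pos htpos]
      calc t * ‖(S ^ N) v'‖ ≤ t * (r ^ N / 2) :=
            mul_le_mul_of_nonneg_left this.le ht
        _ = r ^ N * t / 2 := by ring
  -- B1a : bound propagates to all m
  have B1a : ∀ (v : Y) (t : ℝ), 0 ≤ t → (∀ m < N₁, ‖(S ^ m) v‖ ≤ r ^ m * t) →
      ∀ m, ‖(S ^ m) v‖ ≤ r ^ m * t := by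
    intro v t ht hp m
    induction m using Nat.strong_induction_on with
    | _ m IH =>
      by_cases hm : m < N₁
      · exact hp m hm
      · have := H m (le_of_not_gt hm) v t ht (fun j hj => IH j hj)
        have hpos : 0 ≤ r ^ m * t := by positivity
        linarith
  have B1b : ∀ (v : Y) (t : ℝ), 0 ≤ t → (∀ m < N₁, ‖(S ^ m) v‖ ≤ r ^ m * t) →
      ∀ m, N₁ ≤ m → ‖(S ^ m) v‖ ≤ r ^ m * t / 2 := by
    intro v t ht hp m hm
    exact H m hm v t ht (fun j _ => B1a v t ht hp j)
  -- B2 : iterate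
  have B2 : ∀ (k : ℕ) (v : Y) (t : ℝ), 0 ≤ t → (∀ m < N₁, ‖(S ^ m) v‖ ≤ r ^ m * t) →
      ∀ m, k * N₁ ≤ m → ‖(S ^ m) v‖ ≤ r ^ m * t / 2 ^ k := by
    intro k
    induction k with
    | zero => intro v t ht hp m _; simpa using B1a v t ht hp m
    | succ k IH =>
      intro v t ht hp m hm
      set v' := (S ^ (k * N₁)) v with hv'
      set t' := r ^ (k * N₁) * t / 2 ^ k with ht'
      have ht'0 : 0 ≤ t' := by positivity
      have hp' : ∀ n < N₁, ‖(S ^ n) v'‖ ≤ r ^ n * t' := by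
        intro n _
        rw [hv', pow_apply_add]
        have := IH v t ht hp (n + k * N₁) (Nat.le_add_left _ _)
        calc ‖(S ^ (n + k * N₁)) v‖ ≤ r ^ (n + k * N₁) * t / 2 ^ k := this
          _ = r ^ n * t' := by rw [ht', pow_add]; ring
      have hmm : N₁ ≤ m - k * N₁ := by
        have : (k+1) * N₁ = k * N₁ + N₁ := by ring
        omega
      have := B1b v' t' ht'0 hp' (m - k * N₁) hmm
      rw [hv', pow_apply_add] at this
      have heq : m - k * N₁ + k * N₁ = m := by
        have : (k+1) * N₁ = k * N₁ + N₁ := by ring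
        omega
      rw [heq] at this
      calc ‖(S ^ m) v‖ ≤ r ^ (m - k * N₁) * t' / 2 := this
        _ = r ^ (m - k * N₁) * r ^ (k * N₁) * t / 2 ^ (k+1) := by
            rw [ht', pow_succ]; ring
        _ = r ^ m * t / 2 ^ (k+1) := by rw [← pow_add, heq]
  -- operator norm bound
  set K := 1 + ∑ j ∈ range N₁, ‖S ^ j‖ / r ^ j with hK
  have hK1 : 1 ≤ K := by
    have h : (0:ℝ) ≤ ∑ j ∈ range N₁, ‖S ^ j‖ / r ^ j :=
      Finset.sum_nonneg (fun i _ => by positivity)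
    rw [hK]; linarith
  have hKop : ∀ n < N₁, ‖S ^ n‖ ≤ r ^ n * K := by
    intro n hn
    have h1 : ‖S ^ n‖ / r ^ n ≤ K := by
      have := Finset.single_le_sum (f := fun j => ‖S ^ j‖ / r ^ j)
        (fun i _ => by positivity) (mem_range.mpr hn)
      linarith
    have hrn : (0:ℝ) < r ^ n := by positivity
    calc ‖S ^ n‖ = (‖S ^ n‖ / r ^ n) * r ^ n := by field_simp
      _ ≤ K * r ^ n := mul_le_mul_of_nonneg_right h1 hrn.le
      _ = r ^ n * K := by ring
  have hop : ∀ k : ℕ, ‖S ^ (k * N₁)‖ ≤ r ^ (k * N₁) * K / 2 ^ k := by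
    intro k
    apply ContinuousLinearMap.opNorm_le_bound _ (by positivity)
    intro v
    have hprem : ∀ m < N₁, ‖(S ^ m) v‖ ≤ r ^ m * (K * ‖v‖) := by
      intro m hm
      calc ‖(S ^ m) v‖ ≤ ‖S ^ m‖ * ‖v‖ := (S ^ m).le_opNorm v
        _ ≤ (r ^ m * K) * ‖v‖ := mul_le_mul_of_nonneg_right (hKop m hm) (norm_nonneg v)
        _ = r ^ m * (K * ‖v‖) := by ring
    have := B2 k v (K * ‖v‖) (by positivity) hprem (k * N₁) le_rfl
    calc ‖(S ^ (k * N₁)) v‖ ≤ r ^ (k * N₁) * (K * ‖v‖) / 2 ^ k := this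
      _ = r ^ (k * N₁) * K / 2 ^ k * ‖v‖ := by ring
  -- limit contradiction
  set c := (2:ℝ) ^ (-(1 / (N₁:ℝ))) with hc
  have hN₁pos : (0:ℝ) < (N₁:ℝ) := by exact_mod_cast hN₁1
  have hc1 : c < 1 := by
    apply Real.rpow_lt_one_of_one_lt_of_neg one_lt_two
    simp only [neg_neg, neg_lt, neg_zero]
    positivity
  have hmul : Tendsto (fun k : ℕ => k * N₁) atTop atTop := by
    apply tendsto_atTop_mono (fun k => Nat.le_mul_of_pos_right k (by omega))
    exact tendsto_id
  have hsub : Tendsto (fun k : ℕ => ‖S ^ (k * N₁)‖ ^ (1 / ((k * N₁ : ℕ):ℝ)))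
      atTop (nhds r) := hr.comp hmul
  have he : Tendsto (fun k : ℕ => 1 / ((k * N₁ : ℕ):ℝ)) atTop (nhds 0) :=
    tendsto_one_div_atTop_nhds_zero_nat.comp hmul
  have hKlim : Tendsto (fun k : ℕ => K ^ (1 / ((k * N₁ : ℕ):ℝ))) atTop (nhds 1) := by
    have := (tendsto_const_nhds (x := K) (f := atTop (α := ℕ))).rpow he
      (Or.inl (by linarith))
    simpa using this
  have hg : Tendsto (fun k : ℕ => r * K ^ (1 / ((k * N₁ : ℕ):ℝ)) * c)
      atTop (nhds (r * 1 * c)) :=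
    (tendsto_const_nhds.mul hKlim).mul tendsto_const_nhds
  have hle : ∀ᶠ k : ℕ in atTop, ‖S ^ (k * N₁)‖ ^ (1 / ((k * N₁ : ℕ):ℝ)) ≤
      r * K ^ (1 / ((k * N₁ : ℕ):ℝ)) * c := by
    filter_upwards [eventually_ge_atTop 1] with k hk
    set m := k * N₁ with hm
    have hm1 : 1 ≤ m := by
      have := Nat.mul_le_mul hk hN₁1
      simpa using this
    have hmR : (0:ℝ) < (m:ℝ) := by exact_mod_cast hm1
    have hstep : ‖S ^ m‖ ^ (1 / (m:ℝ)) ≤ (r ^ m * K / 2 ^ k) ^ (1 / (m:ℝ)) :=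
      Real.rpow_le_rpow (norm_nonneg _) (hop k) (by positivity)
    refine le_trans hstep (le_of_eq ?_)
    have hk0 : (k:ℝ) ≠ 0 := by
      have : (0:ℝ) < (k:ℝ) := by exact_mod_cast hk
      exact ne_of_gt this
    have e1 : ((r:ℝ) ^ m) ^ ((1:ℝ)/(m:ℝ)) = r := by
      rw [← Real.rpow_natCast r m, ← Real.rpow_mul hr0.le, mul_one_div,
        div_self (ne_of_gt hmR), Real.rpow_one]
    have e2 : (((2:ℝ) ^ k)⁻¹) ^ ((1:ℝ)/(m:ℝ)) = c := by
      rw [Real.inv_rpow (by positivity), ← Real.rpow_natCast (2:ℝ) k,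
        ← Real.rpow_mul (by norm_num), ← Real.rpow_neg (by norm_num), hc]
      congr 1
      have hmN : (m:ℝ) = (k:ℝ) * (N₁:ℝ) := by rw [hm]; push_cast; ring
      rw [hmN]
      field_simp
    rw [div_eq_mul_inv, Real.mul_rpow (by positivity) (by positivity),
        Real.mul_rpow (by positivity) (by positivity), e1, e2]
  have hfin : r ≤ r * 1 * c := le_of_tendsto_of_tendsto hsub hg hle
  have hr0' : (0:ℝ) < r := hr0
  nlinarith

variable {Y : Type*} [NormedAddCommGroup Y] [NormedSpace ℝ Y]

private lemma growthUpper (S : Y →L[ℝ] Y) (r : ℝ)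
    (hr : Tendsto (fun n : ℕ => ‖S ^ n‖ ^ (1 / (n : ℝ))) atTop (nhds r))
    (hr0 : 0 < r) {b : ℝ} (hb : r < b) :
    ∃ M : ℝ, 1 ≤ M ∧ ∀ n : ℕ, ‖S ^ n‖ ≤ M * b ^ n := by
  have hb0 : (0:ℝ) < b := lt_trans hr0 hb
  obtain ⟨n₁, hn₁⟩ := eventually_atTop.mp (hr.eventually_lt_const hb)
  set n₂ := max n₁ 1 with hn₂
  refine ⟨1 + ∑ j ∈ range n₂, ‖S ^ j‖ / b ^ j, ?_, ?_⟩
  · have h : (0:ℝ) ≤ ∑ j ∈ range n₂, ‖S ^ j‖ / b ^ j :=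
      Finset.sum_nonneg (fun i _ => by positivity)
    linarith
  · intro n
    have hM0 : (0:ℝ) ≤ ∑ j ∈ range n₂, ‖S ^ j‖ / b ^ j :=
      Finset.sum_nonneg (fun i _ => by positivity)
    by_cases hn : n < n₂
    · have hterm : ‖S ^ n‖ / b ^ n ≤ ∑ j ∈ range n₂, ‖S ^ j‖ / b ^ j :=
        Finset.single_le_sum (f := fun j => ‖S ^ j‖ / b ^ j)
          (fun i _ => by positivity) (mem_range.mpr hn)
      have hbn : (0:ℝ) < b ^ n := by positivity
      calc ‖S ^ n‖ = (‖S ^ n‖ / b ^ n) * b ^ n := by field_simp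
        _ ≤ (1 + ∑ j ∈ range n₂, ‖S ^ j‖ / b ^ j) * b ^ n := by nlinarith
    · push_neg at hn
      have hn1 : 1 ≤ n := le_trans (le_max_right _ _) hn
      have hnR : (0:ℝ) < (n:ℝ) := by exact_mod_cast hn1
      have h1 : ‖S ^ n‖ ^ (1 / (n:ℝ)) < b := hn₁ n (le_trans (le_max_left _ _) hn)
      have h2 : ‖S ^ n‖ ≤ b ^ n := by
        have e1 : (‖S ^ n‖ ^ ((1:ℝ) / (n:ℝ))) ^ ((n:ℝ)) = ‖S ^ n‖ := by
          rw [← Real.rpow_mul (norm_nonneg _), one_div,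
            inv_mul_cancel₀ (ne_of_gt hnR), Real.rpow_one]
        calc ‖S ^ n‖ = (‖S ^ n‖ ^ ((1:ℝ) / (n:ℝ))) ^ ((n:ℝ)) := e1.symm
          _ ≤ b ^ ((n:ℝ)) := Real.rpow_le_rpow (Real.rpow_nonneg (norm_nonneg _) _)
              h1.le hnR.le
          _ = b ^ n := Real.rpow_natCast b n
      have hbn : (0:ℝ) < b ^ n := by positivity
      nlinarith

variable {Y : Type*} [NormedAddCommGroup Y] [NormedSpace ℝ Y]

private lemma pow_apply_add' (S : Y →L[ℝ] Y) (a b : ℕ) (v : Y) :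
    (S ^ a) ((S ^ b) v) = (S ^ (a + b)) v := by
  rw [pow_add]; rfl

private lemma geomAux {θ : ℝ} (h0 : 0 ≤ θ) (h1 : θ < 1) (n : ℕ) :
    ∑ i ∈ range n, θ ^ i ≤ (1 - θ)⁻¹ := by
  have hne : θ ≠ 1 := ne_of_lt h1
  have h1θ : 0 < 1 - θ := by linarith
  rw [geom_sum_eq hne]
  have e2 : (θ ^ n - 1) / (θ - 1) = (1 - θ ^ n) * (1 - θ)⁻¹ := by
    have hne1 : θ - 1 ≠ 0 := by linarith
    have hne2 : (1:ℝ) - θ ≠ 0 := by linarith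
    field_simp
    ring
  rw [e2]
  have hp : (0:ℝ) ≤ θ ^ n := by positivity
  nlinarith [inv_pos.mpr h1θ]
end aux


set_option maxHeartbeats 1600000 in
/-- Henry's instability criterion: Let Y be a real Banach space, O an open
neighbourhood of 0, T : O → Y with T(0) = 0. If there is a continuous linear operator S
with spectral radius r(S) = lim ‖Sⁿ‖^{1/n} > 1 and ‖T(w) - S(w)‖ ≤ C‖w‖^q (q > 1) for
small w ∈ O, then 0 is an unstable fixed point of T. -/
theorem stmt_13 {Y : Type*} [NormedAddCommGroup Y] [NormedSpace ℝ Y] [CompleteSpace Y]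
    (O : Set Y) (hO : IsOpen O) (h0 : (0 : Y) ∈ O)
    (T : Y → Y) (hT0 : T 0 = 0)
    (S : Y →L[ℝ] Y) (r : ℝ)
    (hr : Filter.Tendsto (fun n : ℕ => ‖S ^ n‖ ^ (1 / (n : ℝ))) Filter.atTop (nhds r))
    (hr1 : 1 < r)
    (q C r₀ : ℝ) (hq : 1 < q) (hC : 0 < C) (hr₀ : 0 < r₀)
    (happrox : ∀ w ∈ O, ‖w‖ < r₀ → ‖T w - S w‖ ≤ C * ‖w‖ ^ q) :
    ∃ ε > 0, ∀ δ > 0, ∃ w ∈ O, ‖w‖ < δ ∧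
      ∃ n : ℕ, (∀ m < n, T^[m] w ∈ O) ∧ ε ≤ ‖T^[n] w‖ := by
  have hr0 : (0:ℝ) < r := by linarith
  have hq1 : (0:ℝ) < q - 1 := by linarith
  set R := r ^ q with hRdef
  have hrR : r < R := by
    have h : r ^ (1:ℝ) < r ^ q := by
      rw [Real.rpow_lt_rpow_left_iff hr1]; linarith
    rw [Real.rpow_one] at h; exact h
  set b := (r + R)/2 with hbdef
  have hrb : r < b := by rw [hbdef]; linarith
  have hbR : b < R := by rw [hbdef]; linarith
  have hb1 : (1:ℝ) < b := by linarith
  have hb0 : (0:ℝ) < b := by linarith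
  have hR0 : (0:ℝ) < R := by linarith
  obtain ⟨M, hM1, hMb⟩ := growthUpper S r hr hr0 hrb
  have hM0 : (0:ℝ) < M := by linarith
  set A := max 1 (‖S‖ / r) with hAdef
  have hA1 : (1:ℝ) ≤ A := le_max_left _ _
  have hA0 : (0:ℝ) < A := by linarith
  obtain ⟨εO, hεO, hball⟩ := Metric.isOpen_iff.mp hO 0 h0
  have hθ1 : b / R < 1 := (div_lt_one hR0).mpr hbR
  have hθ0 : (0:ℝ) ≤ b / R := by positivity
  set cg := (1 - b/R)⁻¹ with hcgdef
  have hcg0 : 0 < cg := by rw [hcgdef]; exact inv_pos.mpr (by linarith)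
  have hTwoA : (0:ℝ) < (2*A) ^ q := Real.rpow_pos_of_pos (by linarith) q
  set K₀ := C * M * ((2*A) ^ q) * cg with hK₀def
  have hK₀0 : 0 < K₀ := by
    rw [hK₀def]
    exact mul_pos (mul_pos (mul_pos hC hM0) hTwoA) hcg0
  set τ₁ := (r / (8 * K₀)) ^ (1/(q-1)) with hτ₁def
  have hτ₁0 : 0 < τ₁ := Real.rpow_pos_of_pos (by positivity) _
  set τ := min τ₁ (min (εO/(4*A)) (r₀/(4*A))) with hτdef
  have hτ0 : 0 < τ := lt_min hτ₁0 (lt_min (by positivity) (by positivity))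
  have hττ₁ : τ ≤ τ₁ := min_le_left _ _
  have hτεO : 2*A*τ < εO := by
    have h1 : τ ≤ εO/(4*A) := le_trans (min_le_right _ _) (min_le_left _ _)
    have h2 : 2*A*(εO/(4*A)) = εO/2 := by field_simp; ring
    nlinarith
  have hτr₀ : 2*A*τ < r₀ := by
    have h1 : τ ≤ r₀/(4*A) := le_trans (min_le_right _ _) (min_le_right _ _)
    have h2 : 2*A*(r₀/(4*A)) = r₀/2 := by field_simp; ring
    nlinarith
  clear_value R b A cg K₀ τ₁ τ
  refine ⟨τ/8, by linarith, ?_⟩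
  intro δ hδ
  obtain ⟨N₁, hN₁⟩ := pow_unbounded_of_one_lt (τ/δ) hr1
  obtain ⟨N, hNN₁, hN1, v, hv1, hvU, hvL⟩ := keyA S r hr hr1 N₁
  rw [← hAdef] at hvU
  have hrN0 : (0:ℝ) < r ^ N := by positivity
  set δ' := τ / r ^ N with hδ'def
  have hδ'0 : 0 < δ' := by rw [hδ'def]; positivity
  have hδ'τ : δ' ≤ τ := by
    rw [hδ'def]
    exact div_le_self hτ0.le (one_le_pow₀ hr1.le)
  have hδ'rN : δ' * r ^ N = τ := by
    rw [hδ'def]; field_simp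
  have hδ'δ : δ' < δ := by
    have h1 : τ/δ < r^N := lt_of_lt_of_le hN₁ (pow_le_pow_right₀ hr1.le hNN₁)
    rw [div_lt_iff₀ hδ] at h1
    rw [hδ'def, div_lt_iff₀ hrN0]
    linarith [mul_comm (r^N) δ]
  clear_value δ'
  set w := δ' • v with hwdef
  have hwnorm : ‖w‖ ≤ δ' := by
    rw [hwdef, norm_smul, Real.norm_eq_abs, abs_of_pos hδ'0]
    calc δ' * ‖v‖ ≤ δ' * 1 := mul_le_mul_of_nonneg_left hv1 hδ'0.le
      _ = δ' := mul_one _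
  clear_value w
  set x := fun n => T^[n] w with hxdef
  have hxs : ∀ n, x (n+1) = T (x n) := fun n => Function.iterate_succ_apply' T n w
  clear_value x
  have hSkw : ∀ k, k ≤ N → ‖(S ^ k) w‖ ≤ A * δ' * r ^ k := by
    intro k hk
    rw [hwdef, map_smul, norm_smul, Real.norm_eq_abs, abs_of_pos hδ'0]
    calc δ' * ‖(S^k) v‖ ≤ δ' * (A * r^k) :=
          mul_le_mul_of_nonneg_left (hvU k hk) hδ'0.le
      _ = A * δ' * r^k := by ring
  have hSNw : δ' * (r^N/2) ≤ ‖(S^N) w‖ := by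
    rw [hwdef, map_smul, norm_smul, Real.norm_eq_abs, abs_of_pos hδ'0]
    exact mul_le_mul_of_nonneg_left hvL hδ'0.le
  -- Duhamel formula
  have hDuh : ∀ n, x n - (S ^ n) w =
      ∑ k ∈ range n, (S ^ (n - (k+1))) (T (x k) - S (x k)) := by
    intro n
    induction n with
    | zero => simp [hxdef]
    | succ n IH =>
      have h2 : (S ^ (n+1)) w = S ((S ^ n) w) := by rw [pow_succ']; rfl
      have h3 : x (n+1) - (S^(n+1)) w = S (x n - (S^n) w) + (T (x n) - S (x n)) := by
        rw [hxs n, h2, map_sub]; abel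
      rw [h3, IH, map_sum, sum_range_succ]
      congr 1
      · apply sum_congr rfl
        intro k hk
        have hk' : k < n := mem_range.mp hk
        have h4 : S ((S ^ (n - (k+1))) (T (x k) - S (x k)))
            = (S ^ (1 + (n - (k+1)))) (T (x k) - S (x k)) := by
          rw [← pow_apply_add' S 1 (n - (k+1)), pow_one]
        rw [h4]
        have he : 1 + (n - (k+1)) = n + 1 - (k+1) := by omega
        rw [he]
      · rw [Nat.sub_self, pow_zero]
        rfl
  -- power identity
  have rk_pow : ∀ k : ℕ, ((r:ℝ) ^ k) ^ q = R ^ k := by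
    intro k
    rw [hRdef, ← Real.rpow_natCast r k, ← Real.rpow_mul hr0.le, mul_comm,
      Real.rpow_mul hr0.le, Real.rpow_natCast]
  -- geometric sum bound
  have hgeom : ∀ n : ℕ, (∑ k ∈ range n, b ^ (n - (k+1)) * R ^ k) ≤ R ^ (n-1) * cg := by
    intro n
    have hterm : ∀ k ∈ range n, b ^ (n - (k+1)) * R ^ k = (b/R)^(n-(k+1)) * R^(n-1) := by
      intro k hk
      have hk' : k < n := mem_range.mp hk
      have e1 : (b/R)^(n-(k+1)) * R^(n-(k+1)) = b^(n-(k+1)) := by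
        rw [← mul_pow, div_mul_cancel₀ _ (ne_of_gt hR0)]
      have e2 : (n-(k+1)) + k = n - 1 := by omega
      calc b ^ (n - (k+1)) * R ^ k
          = ((b/R)^(n-(k+1)) * R^(n-(k+1))) * R^k := by rw [e1]
        _ = (b/R)^(n-(k+1)) * (R^(n-(k+1)) * R^k) := by ring
        _ = (b/R)^(n-(k+1)) * R^(n-1) := by rw [← pow_add, e2]
    rw [sum_congr rfl hterm, ← sum_mul]
    have hrefl : ∑ k ∈ range n, (b/R)^(n-(k+1)) = ∑ j ∈ range n, (b/R)^j := by
      have h := Finset.sum_range_reflect (fun j => (b/R)^j) n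
      calc ∑ k ∈ range n, (b/R)^(n-(k+1))
          = ∑ k ∈ range n, (b/R)^(n-1-k) := by
            apply sum_congr rfl; intro k hk; congr 1; omega
        _ = ∑ j ∈ range n, (b/R)^j := h
    rw [hrefl]
    calc (∑ j ∈ range n, (b/R)^j) * R^(n-1) ≤ (1 - b/R)⁻¹ * R^(n-1) :=
          mul_le_mul_of_nonneg_right (geomAux hθ0 hθ1 n) (by positivity)
      _ = R^(n-1) * cg := by rw [hcgdef]; ring
  -- main bootstrap
  have key : ∀ n, n ≤ N → ‖x n - (S ^ n) w‖ ≤ δ' * r ^ n / 8 := by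
    intro n
    induction n using Nat.strong_induction_on with
    | _ n IH =>
      intro hnN
      have hxk : ∀ k, k < n → ‖x k‖ ≤ 2*A*δ'*r^k ∧ x k ∈ O ∧ ‖x k‖ < r₀ := by
        intro k hk
        have hkN : k ≤ N := le_trans (Nat.le_of_lt hk) hnN
        have hDk := IH k hk hkN
        have hS := hSkw k hkN
        have htri : ‖x k‖ ≤ ‖x k - (S^k) w‖ + ‖(S^k) w‖ := by
          calc ‖x k‖ = ‖(x k - (S^k) w) + (S^k) w‖ := by congr 1; abel
            _ ≤ ‖x k - (S^k) w‖ + ‖(S^k) w‖ := norm_add_le _ _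
        have hxkn : ‖x k‖ ≤ 2*A*δ'*r^k := by
          have hp : (0:ℝ) < r ^ k := by positivity
          nlinarith [mul_nonneg (mul_nonneg (sub_nonneg.mpr hA1) hδ'0.le) hp.le,
            mul_nonneg hδ'0.le hp.le]
        have hτk : ‖x k‖ ≤ 2*A*τ := by
          have h1 : r^k ≤ r^N := pow_le_pow_right₀ hr1.le hkN
          have h2 : δ' * r^k ≤ τ := by
            rw [← hδ'rN]
            exact mul_le_mul_of_nonneg_left h1 hδ'0.le
          nlinarith
        refine ⟨hxkn, hball ?_, by linarith⟩
        rw [Metric.mem_ball, dist_zero_right]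
        linarith
      rcases Nat.eq_zero_or_pos n with h0 | hpos
      · subst h0
        have : x 0 - (S ^ 0) w = 0 := by simp [hxdef]
        rw [this, norm_zero]
        positivity
      · have hn1 : 1 ≤ n := hpos
        rw [hDuh n]
        have hbound : ∀ k ∈ range n, ‖(S ^ (n - (k+1))) (T (x k) - S (x k))‖ ≤
            (M * C * ((2*A)^q) * (δ'^q)) * (b ^ (n-(k+1)) * R ^ k) := by
          intro k hk
          have hk' := mem_range.mp hk
          obtain ⟨h1, h2, h3⟩ := hxk k hk'
          have hT := happrox (x k) h2 h3
          have hxq : ‖x k‖ ^ q ≤ ((2*A)^q) * (δ'^q) * R^k := by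
            calc ‖x k‖ ^ q ≤ (2*A*δ'*r^k) ^ q :=
                  Real.rpow_le_rpow (norm_nonneg _) h1 (by linarith)
              _ = ((2*A*δ') * r^k) ^ q := by ring_nf
              _ = (2*A*δ')^q * ((r^k : ℝ))^q :=
                  Real.mul_rpow (by positivity) (by positivity)
              _ = ((2*A)^q * δ'^q) * R^k := by
                  rw [Real.mul_rpow (by positivity) hδ'0.le, rk_pow]
          calc ‖(S ^ (n - (k+1))) (T (x k) - S (x k))‖
              ≤ ‖S ^ (n-(k+1))‖ * ‖T (x k) - S (x k)‖ := (S ^ (n-(k+1))).le_opNorm _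
            _ ≤ (M * b^(n-(k+1))) * (C * (((2*A)^q) * (δ'^q) * R^k)) := by
                apply mul_le_mul (hMb _)
                  (le_trans hT (mul_le_mul_of_nonneg_left hxq hC.le))
                  (norm_nonneg _) (by positivity)
            _ = (M * C * ((2*A)^q) * (δ'^q)) * (b^(n-(k+1)) * R^k) := by ring
        have harith : (M * C * ((2*A)^q) * (δ'^q)) * (R^(n-1) * cg) ≤ δ' * r ^ n / 8 := by
          have hX : δ' * r^(n-1) ≤ τ₁ := by
            have h1 : r^(n-1) ≤ r^N := pow_le_pow_right₀ hr1.le (by omega)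
            have h2 : δ' * r^(n-1) ≤ δ' * r^N :=
              mul_le_mul_of_nonneg_left h1 hδ'0.le
            rw [hδ'rN] at h2
            linarith
          have hYq : (δ' * r^(n-1)) ^ (q-1) ≤ r / (8*K₀) := by
            calc (δ' * r^(n-1)) ^ (q-1) ≤ τ₁ ^ (q-1) :=
                  Real.rpow_le_rpow (by positivity) hX (by linarith)
              _ = r/(8*K₀) := by
                  rw [hτ₁def, ← Real.rpow_mul (by positivity : (0:ℝ) ≤ r/(8*K₀)),
                    one_div, inv_mul_cancel₀ (by linarith : q - 1 ≠ 0), Real.rpow_one]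
          have hdq : δ'^q = δ' * δ'^(q-1) := by
            have h := Real.rpow_add hδ'0 1 (q-1)
            have e : 1 + (q-1) = q := by ring
            rw [e, Real.rpow_one] at h
            exact h
          have hRq : R^(n-1) = r^(n-1) * ((r^(n-1):ℝ))^(q-1) := by
            have h := Real.rpow_add (show (0:ℝ) < r^(n-1) by positivity) 1 (q-1)
            have e : 1 + (q-1) = q := by ring
            rw [e, Real.rpow_one] at h
            rw [← rk_pow (n-1), h]
          have hsplit : (δ'^q) * R^(n-1)
              = (δ' * r^(n-1)) * ((δ' * r^(n-1)) ^ (q-1)) := by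
            rw [hdq, hRq, Real.mul_rpow hδ'0.le (by positivity : (0:ℝ) ≤ r^(n-1))]
            ring
          have hfin : (M * C * ((2*A)^q) * (δ'^q)) * (R^(n-1) * cg)
              = K₀ * ((δ' * r^(n-1)) * ((δ' * r^(n-1)) ^ (q-1))) := by
            rw [hK₀def, ← hsplit]; ring
          rw [hfin]
          calc K₀ * ((δ' * r^(n-1)) * ((δ' * r^(n-1)) ^ (q-1)))
              ≤ K₀ * ((δ' * r^(n-1)) * (r/(8*K₀))) := by
                apply mul_le_mul_of_nonneg_left _ hK₀0.le
                exact mul_le_mul_of_nonneg_left hYq (by positivity)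
            _ = δ' * (r^(n-1) * r) / 8 := by
                field_simp
            _ = δ' * r ^ n / 8 := by
                rw [← pow_succ, show n-1+1 = n by omega]
        calc ‖∑ k ∈ range n, (S ^ (n - (k+1))) (T (x k) - S (x k))‖
            ≤ ∑ k ∈ range n, ‖(S ^ (n - (k+1))) (T (x k) - S (x k))‖ :=
              norm_sum_le _ _
          _ ≤ ∑ k ∈ range n, (M * C * ((2*A)^q) * (δ'^q)) * (b ^ (n-(k+1)) * R ^ k) :=
              sum_le_sum hbound
          _ = (M * C * ((2*A)^q) * (δ'^q)) * ∑ k ∈ range n, (b ^ (n-(k+1)) * R ^ k) := by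
              rw [mul_sum]
          _ ≤ (M * C * ((2*A)^q) * (δ'^q)) * (R^(n-1) * cg) := by
              apply mul_le_mul_of_nonneg_left (hgeom n) (by positivity)
          _ ≤ δ' * r ^ n / 8 := harith
  -- norms of iterates
  have hxnorm : ∀ k, k ≤ N → ‖x k‖ ≤ 2*A*δ'*r^k := by
    intro k hkN
    have hDk := key k hkN
    have hS := hSkw k hkN
    have htri : ‖x k‖ ≤ ‖x k - (S^k) w‖ + ‖(S^k) w‖ := by
      calc ‖x k‖ = ‖(x k - (S^k) w) + (S^k) w‖ := by congr 1; abel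
        _ ≤ ‖x k - (S^k) w‖ + ‖(S^k) w‖ := norm_add_le _ _
    have hp : (0:ℝ) < r ^ k := by positivity
    nlinarith [mul_nonneg (mul_nonneg (sub_nonneg.mpr hA1) hδ'0.le) hp.le,
      mul_nonneg hδ'0.le hp.le]
  refine ⟨w, ?_, ?_, N, ?_, ?_⟩
  · apply hball
    rw [Metric.mem_ball, dist_zero_right]
    nlinarith
  · linarith
  · intro m hm
    have hmN : m ≤ N := le_of_lt hm
    have h1 := hxnorm m hmN
    have h2 : r^m ≤ r^N := pow_le_pow_right₀ hr1.le hmN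
    have h3 : δ' * r^m ≤ τ := by
      rw [← hδ'rN]
      exact mul_le_mul_of_nonneg_left h2 hδ'0.le
    have hmem : x m ∈ O := by
      apply hball
      rw [Metric.mem_ball, dist_zero_right]
      nlinarith
    simpa [hxdef] using hmem
  · have hgoal : τ/8 ≤ ‖x N‖ := by
      have hD := key N le_rfl
      have h1 : ‖(S^N) w‖ ≤ ‖x N‖ + ‖x N - (S^N) w‖ := by
        calc ‖(S^N) w‖ = ‖x N - (x N - (S^N) w)‖ := by congr 1; abel
          _ ≤ ‖x N‖ + ‖x N - (S^N) w‖ := norm_sub_le _ _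
      have e1 : δ' * (r^N/2) = τ/2 := by rw [← hδ'rN]; ring
      have e2 : δ' * r^N / 8 = τ/8 := by rw [hδ'rN]
      linarith
    simpa [hxdef] using hgoal
end

section
/- Let Y be a real Banach space, O ⊆ Y an open neighbourhood of a point φ ∈ Y, and W : O → Y a twice continuously (Fréchet) differentiable map with W(φ) = φ. If the Fréchet derivative W'(φ), a continuous linear operator on Y, has spectral radius r(W'(φ)) = lim_{n→∞} ‖(W'(φ))ⁿ‖^{1/n} > 1 (in particular if some spectral value μ of W'(φ) satisfies |μ| > 1), then φ is an unstable fixed point of W. -/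
/-!
Let `A = W'(φ)` and choose `1 < s < r < ρ < s²`. Then `‖Aⁿ‖ ≤ M ρⁿ`, while `‖Aⁿ‖ ≥ rⁿ` outgrows
`sⁿ`, so by Banach–Steinhaus some `x` has `‖Aⁿ x‖ / sⁿ` unbounded. Start the orbit at a multiple
`h` of `x` so small that `‖Aᵏ h‖ ≤ L sᵏ` until the first time `N` at which it exceeds this, where
`L sᴺ = κ` is a fixed small constant. Writing `W (φ + y) = φ + A y + O(‖y‖²)`, the orbit of `φ + h`
differs from `φ + Aⁿ h` by `∑ A^{n-1-k} O(L² s^{2k}) = O(L² s^{2n})`, the sum being geometric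
because `ρ < s²`. For `n ≤ N` this is at most `L sⁿ / 2`, so at time `N` the orbit is at distance
at least `κ / 2` from `φ`, however small `h` is.
-/

open Filter Set Topology Asymptotics Metric

theorem ContDiffAt.isBigO_sub_sub_fderiv {E F : Type*} [NormedAddCommGroup E] [NormedSpace ℝ E]
    [NormedAddCommGroup F] [NormedSpace ℝ F] {f : E → F} {x : E} (hf : ContDiffAt ℝ 2 f x) :
    (fun h => f (x + h) - f x - fderiv ℝ f x h) =O[𝓝 0] fun h => ‖h‖ ^ 2 := by
  obtain ⟨K, t, ht, hK⟩ := (hf.fderiv_right (m := 1) le_rfl).exists_lipschitzOnWith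
  have hdiff : ∀ᶠ y in 𝓝 x, DifferentiableAt ℝ f y :=
    (hf.eventually (by simp)).mono fun y hy => hy.differentiableAt (by norm_num)
  obtain ⟨ε, hε, hball⟩ := Metric.mem_nhds_iff.1 (inter_mem ht hdiff)
  refine .of_bound K ?_
  filter_upwards [ball_mem_nhds 0 hε] with h hh
  have hsub : closedBall x ‖h‖ ⊆ t ∩ {y | DifferentiableAt ℝ f y} :=
    (closedBall_subset_ball (by simpa using hh)).trans hball
  have hx : x ∈ closedBall x ‖h‖ := mem_closedBall_self (norm_nonneg h)
  have hxh : x + h ∈ closedBall x ‖h‖ := by simp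
  have hmv := (convex_closedBall x ‖h‖).norm_image_sub_le_of_norm_fderiv_le'
    (fun y hy => (hsub hy).2)
    (fun y hy => hK.norm_sub_le_of_le (hsub hy).1 (hsub hx).1 (mem_closedBall_iff_norm.1 hy)) hx hxh
  simpa [pow_two, mul_assoc] using hmv

section SpectralRadius

variable {R : Type*} [SeminormedRing R] {a : R} {r : ℝ}

theorem le_norm_pow_rpow_of_tendsto
    (hr : Tendsto (fun n : ℕ => ‖a ^ n‖ ^ (1 / (n : ℝ))) atTop (𝓝 r)) {n : ℕ} (hn : n ≠ 0) :
    r ≤ ‖a ^ n‖ ^ (1 / (n : ℝ)) := by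
  have hmul : Tendsto (fun k : ℕ => n * k) atTop atTop :=
    tendsto_id.const_mul_atTop' (Nat.pos_of_ne_zero hn)
  refine le_of_tendsto (hr.comp hmul) ?_
  filter_upwards [eventually_ne_atTop 0] with k hk
  calc ‖a ^ (n * k)‖ ^ (1 / ((n * k : ℕ) : ℝ))
      ≤ (‖a ^ n‖ ^ k) ^ (1 / ((n * k : ℕ) : ℝ)) := by
        rw [pow_mul]
        gcongr
        exact norm_pow_le' _ (Nat.pos_of_ne_zero hk)
    _ = ‖a ^ n‖ ^ (1 / (n : ℝ)) := by
        rw [← Real.rpow_natCast, ← Real.rpow_mul (norm_nonneg _)]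
        push_cast
        field_simp

theorem nonneg_of_tendsto_norm_pow_rpow
    (hr : Tendsto (fun n : ℕ => ‖a ^ n‖ ^ (1 / (n : ℝ))) atTop (𝓝 r)) : 0 ≤ r :=
  ge_of_tendsto' hr fun _ => by positivity

theorem pow_le_norm_pow_of_tendsto
    (hr : Tendsto (fun n : ℕ => ‖a ^ n‖ ^ (1 / (n : ℝ))) atTop (𝓝 r)) {n : ℕ} (hn : n ≠ 0) :
    r ^ n ≤ ‖a ^ n‖ := by
  calc r ^ n ≤ (‖a ^ n‖ ^ (1 / (n : ℝ))) ^ n := by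
        have := nonneg_of_tendsto_norm_pow_rpow hr
        gcongr; exact le_norm_pow_rpow_of_tendsto hr hn
    _ = ‖a ^ n‖ := by rw [one_div, Real.rpow_inv_natCast_pow (norm_nonneg _) hn]

theorem exists_norm_pow_le_mul_pow_of_tendsto
    (hr : Tendsto (fun n : ℕ => ‖a ^ n‖ ^ (1 / (n : ℝ))) atTop (𝓝 r)) {ρ : ℝ} (hrρ : r < ρ) :
    ∃ M, ∀ n, ‖a ^ n‖ ≤ M * ρ ^ n := by
  have hρ : 0 < ρ := (nonneg_of_tendsto_norm_pow_rpow hr).trans_lt hrρ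
  have hev : ∀ᶠ n : ℕ in atTop, ‖a ^ n‖ / ρ ^ n ≤ 1 := by
    filter_upwards [hr.eventually (eventually_le_nhds hrρ), eventually_ne_atTop 0] with n hn hn0
    rw [one_div] at hn
    rw [div_le_one (by positivity), ← Real.rpow_inv_natCast_pow (norm_nonneg _) hn0]
    gcongr
  obtain ⟨M, hM⟩ := (isBoundedUnder_of_eventually_le hev).bddAbove_range
  refine ⟨M, fun n => ?_⟩
  rw [← div_le_iff₀ (by positivity)]
  exact hM (mem_range_self n)

theorem not_bddAbove_norm_pow_div_pow_of_tendsto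
    (hr : Tendsto (fun n : ℕ => ‖a ^ n‖ ^ (1 / (n : ℝ))) atTop (𝓝 r)) {s : ℝ} (hs : 0 < s)
    (hsr : s < r) : ¬BddAbove (range fun n : ℕ => ‖a ^ n‖ / s ^ n) := by
  refine not_bddAbove_of_tendsto_atTop (tendsto_atTop_mono' _ ?_
    (tendsto_pow_atTop_atTop_of_one_lt ((one_lt_div hs).2 hsr)))
  filter_upwards [eventually_ne_atTop 0] with n hn
  rw [div_pow]
  gcongr
  exact pow_le_norm_pow_of_tendsto hr hn

end SpectralRadius

namespace ContinuousLinearMap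

variable {E : Type*} [NormedAddCommGroup E] [NormedSpace ℝ E] (A : E →L[ℝ] E)

theorem exists_not_bddAbove_norm_pow_apply_div [CompleteSpace E] {s : ℝ} (hs : 0 < s)
    (h : ¬BddAbove (range fun n : ℕ => ‖A ^ n‖ / s ^ n)) :
    ∃ x, ¬BddAbove (range fun n : ℕ => ‖(A ^ n) x‖ / s ^ n) := by
  by_contra! hbdd
  obtain ⟨C, hC⟩ := banach_steinhaus (g := fun n : ℕ => (s ^ n)⁻¹ • A ^ n) fun x => by
    obtain ⟨C, hC⟩ := hbdd x
    exact ⟨C, fun n => by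
      simpa [norm_smul, inv_mul_eq_div, abs_of_pos hs] using hC (mem_range_self n)⟩
  exact h ⟨C, forall_mem_range.2 fun n => by
    simpa [norm_smul, inv_mul_eq_div, abs_of_pos hs] using hC n⟩

theorem sub_pow_apply_eq_sum (e : ℕ → E) (n : ℕ) :
    e n - (A ^ n) (e 0) = ∑ k ∈ Finset.range n, (A ^ (n - 1 - k)) (e (k + 1) - A (e k)) := by
  induction n with
  | zero => simp
  | succ n ih =>
    have hpow : ∀ k ∈ Finset.range n, (A ^ (n + 1 - 1 - k)) (e (k + 1) - A (e k)) =
        A ((A ^ (n - 1 - k)) (e (k + 1) - A (e k))) := fun k hk => by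
      rw [← mul_apply_eq_comp, ← pow_succ', show n - 1 - k + 1 = n + 1 - 1 - k by
        have := Finset.mem_range.1 hk; omega]
    rw [Finset.sum_range_succ, Finset.sum_congr rfl hpow, ← map_sum, ← ih, Nat.add_sub_cancel,
      Nat.sub_self, pow_zero, one_apply_eq_self, pow_succ', mul_apply_eq_comp, map_sub]
    abel

variable {A} {M ρ : ℝ}

theorem norm_sub_pow_apply_le (hA : ∀ n, ‖A ^ n‖ ≤ M * ρ ^ n) (hρ : 0 ≤ ρ) {σ B : ℝ}
    (hρσ : ρ < σ) (hB : 0 ≤ B) {e : ℕ → E} {n : ℕ}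
    (hstep : ∀ k < n, ‖e (k + 1) - A (e k)‖ ≤ B * σ ^ k) :
    ‖e n - (A ^ n) (e 0)‖ ≤ M * B * σ ^ n / (σ - ρ) := by
  have hM : 0 ≤ M := by simpa using (norm_nonneg _).trans (hA 0)
  rw [sub_pow_apply_eq_sum]
  calc ‖∑ k ∈ Finset.range n, (A ^ (n - 1 - k)) (e (k + 1) - A (e k))‖
      ≤ ∑ k ∈ Finset.range n, M * ρ ^ (n - 1 - k) * (B * σ ^ k) :=
        (norm_sum_le _ _).trans <| Finset.sum_le_sum fun k hk =>
          (le_opNorm _ _).trans <| mul_le_mul (hA _) (hstep k (Finset.mem_range.1 hk))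
            (norm_nonneg _) (by positivity)
    _ = M * B * ∑ k ∈ Finset.range n, σ ^ k * ρ ^ (n - 1 - k) := by
        rw [Finset.mul_sum]; exact Finset.sum_congr rfl fun k _ => by ring
    _ ≤ M * B * (σ ^ n / (σ - ρ)) := by
        gcongr
        rw [le_div_iff₀ (sub_pos.2 hρσ), geom_sum₂_mul]
        have := pow_nonneg hρ n
        linarith
    _ = M * B * σ ^ n / (σ - ρ) := by ring

theorem norm_iterate_sub_pow_apply_le (hA : ∀ n, ‖A ^ n‖ ≤ M * ρ ^ n) (hρ : 0 ≤ ρ) {s : ℝ}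
    (hρs : ρ < s ^ 2) (hs : 1 ≤ s) {g : E → E} {C ε₀ : ℝ} (hC : 0 ≤ C)
    (hg : ∀ y, ‖y‖ ≤ ε₀ → ‖g y - A y‖ ≤ C * ‖y‖ ^ 2) {L : ℝ} (hL : 0 ≤ L) {h : E} {N : ℕ}
    (hlin : ∀ k < N, ‖(A ^ k) h‖ ≤ L * s ^ k) (hε₀ : 2 * L * s ^ N ≤ ε₀)
    (hsmall : 8 * C * M * L * s ^ N ≤ s ^ 2 - ρ) :
    ∀ n ≤ N, ‖g^[n] h - (A ^ n) h‖ ≤ L * s ^ n / 2 := by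
  have hM : 0 ≤ M := by simpa using (norm_nonneg _).trans (hA 0)
  intro n
  induction n using Nat.strong_induction_on with
  | _ n ih =>
    intro hnN
    have horbit : ∀ k < n, ‖g^[k] h‖ ≤ 2 * L * s ^ k := fun k hk => by
      have := norm_le_norm_add_norm_sub' (g^[k] h) ((A ^ k) h)
      linarith [norm_nonneg ((A ^ k) h), hlin k (hk.trans_le hnN), ih k hk (hk.trans_le hnN).le]
    have hstep : ∀ k < n, ‖g^[k + 1] h - A (g^[k] h)‖ ≤ 4 * C * L ^ 2 * (s ^ 2) ^ k :=
      fun k hk => by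
        have hsk : 2 * L * s ^ k ≤ 2 * L * s ^ N := by gcongr; omega
        rw [Function.iterate_succ_apply']
        calc ‖g (g^[k] h) - A (g^[k] h)‖ ≤ C * ‖g^[k] h‖ ^ 2 :=
              hg _ ((horbit k hk).trans (hsk.trans hε₀))
          _ ≤ C * (2 * L * s ^ k) ^ 2 := by gcongr; exact horbit k hk
          _ = 4 * C * L ^ 2 * (s ^ 2) ^ k := by ring
    have hsn : 8 * C * M * L * s ^ n ≤ s ^ 2 - ρ := le_trans (by gcongr) hsmall
    calc ‖g^[n] h - (A ^ n) h‖ ≤ M * (4 * C * L ^ 2) * (s ^ 2) ^ n / (s ^ 2 - ρ) :=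
          norm_sub_pow_apply_le (e := fun k => g^[k] h) hA hρ hρs (by positivity) hstep
      _ = L * s ^ n / 2 * (8 * C * M * L * s ^ n / (s ^ 2 - ρ)) := by ring
      _ ≤ L * s ^ n / 2 :=
        mul_le_of_le_one_right (by positivity) (div_le_one_of_le₀ hsn (by linarith))

theorem exists_escaping_orbit (hA : ∀ n, ‖A ^ n‖ ≤ M * ρ ^ n) (hρ : 0 ≤ ρ) {s : ℝ}
    (hρs : ρ < s ^ 2) (hs : 1 ≤ s) {g : E → E} {C ε₀ : ℝ} (hC : 0 ≤ C) (hε₀ : 0 < ε₀)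
    (hg : ∀ y, ‖y‖ ≤ ε₀ → ‖g y - A y‖ ≤ C * ‖y‖ ^ 2) {x : E}
    (hx : ¬BddAbove (range fun n : ℕ => ‖(A ^ n) x‖ / s ^ n)) :
    ∃ ε > 0, ∀ δ > 0, ∃ h, ‖h‖ < δ ∧ ∃ N, (∀ m < N, ‖g^[m] h‖ ≤ ε₀) ∧ ε ≤ ‖g^[N] h‖ := by
  have hM : 0 ≤ M := by simpa using (norm_nonneg _).trans (hA 0)
  obtain ⟨κ, hκ, hκε₀, hκM⟩ : ∃ κ > 0, 2 * κ ≤ ε₀ ∧ 8 * C * M * κ ≤ s ^ 2 - ρ := by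
    set κ := min (ε₀ / 2) ((s ^ 2 - ρ) / (8 * C * M + 1))
    have hκ : 0 < κ := lt_min (by positivity) (div_pos (by linarith) (by positivity))
    have hκ₂ : κ ≤ (s ^ 2 - ρ) / (8 * C * M + 1) := min_le_right _ _
    refine ⟨κ, hκ, by linarith [min_le_left (ε₀ / 2) ((s ^ 2 - ρ) / (8 * C * M + 1))], ?_⟩
    rw [le_div_iff₀ (by positivity)] at hκ₂
    linarith
  refine ⟨κ / 2, by positivity, fun δ hδ => ?_⟩
  set G := κ * ‖x‖ / δ + 1
  have hG : 0 < G := by positivity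
  have hexit : ∃ n, G < ‖(A ^ n) x‖ / s ^ n := by
    simpa using not_bddAbove_iff.1 hx G
  classical
  set N := Nat.find hexit
  set L := κ / s ^ N
  have hLN : L * s ^ N = κ := div_mul_cancel₀ _ (by positivity)
  set h := (L / G) • x
  have hAh (n : ℕ) : ‖(A ^ n) h‖ = L / G * ‖(A ^ n) x‖ := by
    rw [map_smul, norm_smul, Real.norm_of_nonneg (by positivity)]
  have hlin : ∀ k < N, ‖(A ^ k) h‖ ≤ L * s ^ k := fun k hk => by
    have := not_lt.1 (Nat.find_min hexit hk)
    rw [div_le_iff₀ (by positivity)] at this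
    calc ‖(A ^ k) h‖ = L / G * ‖(A ^ k) x‖ := hAh k
      _ ≤ L / G * (G * s ^ k) := by gcongr
      _ = L * s ^ k := by field_simp
  have htrack := norm_iterate_sub_pow_apply_le hA hρ hρs hs hC hg (by positivity) hlin
    (by rwa [mul_assoc, hLN]) (by rwa [mul_assoc, hLN])
  have hLκ : L ≤ κ := div_le_self hκ.le (one_le_pow₀ hs)
  refine ⟨h, ?_, N, fun m hm => ?_, ?_⟩
  · have hxG : κ * ‖x‖ < G * δ := by
      simp only [G]; field_simp; linarith
    rw [norm_smul, Real.norm_of_nonneg (by positivity), div_mul_eq_mul_div, div_lt_iff₀ hG]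
    nlinarith [norm_nonneg x]
  · have hLm : L * s ^ m ≤ L * s ^ N := by gcongr
    have := norm_le_norm_add_norm_sub' (g^[m] h) ((A ^ m) h)
    linarith [hlin m hm, htrack m hm.le]
  · have hAN : κ ≤ ‖(A ^ N) h‖ := by
      have := Nat.find_spec hexit
      rw [lt_div_iff₀ (by positivity)] at this
      calc κ = L / G * (G * s ^ N) := by rw [← hLN]; field_simp
        _ ≤ ‖(A ^ N) h‖ := by rw [hAh]; gcongr
    have := norm_le_norm_add_norm_sub (g^[N] h) ((A ^ N) h)
    linarith [htrack N le_rfl]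

end ContinuousLinearMap

/-- If W is C² on an open neighbourhood O of a fixed point φ (W(φ) = φ) in a
real Banach space and the Fréchet derivative W'(φ) has spectral radius
r(W'(φ)) = lim ‖(W'(φ))ⁿ‖^{1/n} > 1, then φ is an unstable fixed point of W. -/
theorem stmt_14 {Y : Type*} [NormedAddCommGroup Y] [NormedSpace ℝ Y] [CompleteSpace Y]
    (O : Set Y) (hO : IsOpen O) (φ : Y) (hφ : φ ∈ O)
    (W : Y → Y) (hW : ContDiffOn ℝ 2 W O) (hWφ : W φ = φ)
    (r : ℝ)
    (hr : Filter.Tendsto (fun n : ℕ => ‖(fderiv ℝ W φ) ^ n‖ ^ (1 / (n : ℝ)))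
      Filter.atTop (nhds r))
    (hr1 : 1 < r) :
    ∃ ε > 0, ∀ δ > 0, ∃ w ∈ O, ‖w - φ‖ < δ ∧
      ∃ n : ℕ, (∀ m < n, W^[m] w ∈ O) ∧ ε ≤ ‖W^[n] w - φ‖ := by
  set A := fderiv ℝ W φ
  obtain ⟨s, hrs, hsr⟩ := exists_between (Real.sqrt_lt_self_iff.2 hr1)
  have hs : 1 < s := ((Real.lt_sqrt zero_le_one).2 (by simpa using hr1)).trans hrs
  obtain ⟨ρ, hrρ, hρs⟩ := exists_between (Real.sqrt_lt' (by linarith) |>.1 hrs : r < s ^ 2)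
  obtain ⟨M, hM⟩ := exists_norm_pow_le_mul_pow_of_tendsto hr hrρ
  obtain ⟨x, hx⟩ := A.exists_not_bddAbove_norm_pow_apply_div (by linarith)
    (not_bddAbove_norm_pow_div_pow_of_tendsto hr (by linarith) hsr)
  obtain ⟨C, hC, hTaylor⟩ := isBigO_iff'.1 (hW.contDiffAt (hO.mem_nhds hφ)).isBigO_sub_sub_fderiv
  have hnear : ∀ᶠ y in 𝓝 (0 : Y), φ + y ∈ O ∧ ‖W (φ + y) - φ - A y‖ ≤ C * ‖y‖ ^ 2 := by
    refine (((continuous_const_add φ).tendsto' 0 φ (add_zero φ)).eventually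
      (hO.mem_nhds hφ)).and ?_
    filter_upwards [hTaylor] with y hy
    simpa [hWφ] using hy
  obtain ⟨ε₀, hε₀, hball⟩ := nhds_basis_closedBall.eventually_iff.1 hnear
  set g : Y → Y := fun y => W (φ + y) - φ
  obtain ⟨ε, hε, hesc⟩ := A.exists_escaping_orbit hM (by linarith) hρs hs.le hC.le hε₀ (g := g)
    (fun y hy => (hball (mem_closedBall_zero_iff.2 hy)).2) hx
  have hconj (m : ℕ) (y : Y) : W^[m] (φ + y) = φ + g^[m] y :=
    (Function.Semiconj.iterate_right (fun y => by simp [g]) m y).symm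
  refine ⟨ε, hε, fun δ hδ => ?_⟩
  obtain ⟨h, hhδ, N, hN, hεN⟩ := hesc (min δ ε₀) (by positivity)
  refine ⟨φ + h, (hball (mem_closedBall_zero_iff.2 (hhδ.le.trans (min_le_right _ _)))).1,
    by simpa using hhδ.trans_le (min_le_left _ _), N, fun m hm => ?_, by simpa [hconj] using hεN⟩
  rw [hconj]
  exact (hball (mem_closedBall_zero_iff.2 (hN m hm))).1
end
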